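/- arXiv:2008.03065 — 13 statements merged into one kernel-verified Lean document; each statement's English description precedes it below -/
import Mathlib

section
/- Let K be a finite poset and f = f_1 ∘ ... ∘ f_k where f and each f_i are idempotent regressive order-preserving endomorphisms of K. Then the image of f equals the intersection of the images of the f_i. -/
/-!
An idempotent map has its fixed points as image, so it suffices to see that `y` is fixed by the
composite `f` iff it is fixed by every `f_i`. If `y = g (h y)` with `g`, `h` regressive, then
`y = g (h y) ≤ h y ≤ y`, forcing `h y = y` and then `g y = y`; induct along the composition.
-/

open Function

theorem range_eq_fixedPoints_of_comp_self {α : Type*} {g : α → α} (hg : g ∘ g = g) :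
    Set.range g = fixedPoints g := by
  ext y
  constructor
  · rintro ⟨x, rfl⟩
    exact congrFun hg x
  · exact fun hy => ⟨y, hy⟩

section Regressive

variable {K : Type*}

theorem isFixedPt_comp_iff_of_le [PartialOrder K] {g h : K → K} (hg : ∀ x, g x ≤ x)
    (hh : ∀ x, h x ≤ x) {y : K} : IsFixedPt (g ∘ h) y ↔ IsFixedPt g y ∧ IsFixedPt h y := by
  refine ⟨fun hy => ?_, fun ⟨hgy, hhy⟩ => hgy.comp hhy⟩
  have hhy : IsFixedPt h y := le_antisymm (hh y) (hy.symm.le.trans (hg (h y)))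
  exact ⟨hy.left_of_comp hhy, hhy⟩

theorem foldr_comp_apply_le [Preorder K] {L : List (K → K)} (hL : ∀ g ∈ L, ∀ x, g x ≤ x)
    (x : K) : L.foldr (· ∘ ·) id x ≤ x := by
  induction L with
  | nil => exact le_rfl
  | cons g L ih =>
    rw [List.forall_mem_cons] at hL
    exact (hL.1 _).trans (ih hL.2)

theorem isFixedPt_foldr_comp_iff [PartialOrder K] {L : List (K → K)}
    (hL : ∀ g ∈ L, ∀ x, g x ≤ x) {y : K} :
    IsFixedPt (L.foldr (· ∘ ·) id) y ↔ ∀ g ∈ L, IsFixedPt g y := by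
  induction L with
  | nil => simp [IsFixedPt]
  | cons g L ih =>
    rw [List.forall_mem_cons] at hL
    rw [List.foldr_cons, isFixedPt_comp_iff_of_le hL.1 (foldr_comp_apply_le hL.2),
      ih hL.2, List.forall_mem_cons]

end Regressive

theorem stmt_1_general {K : Type*} [PartialOrder K]
    (k : ℕ) (f : K → K) (fs : Fin k → K → K)
    (hfidem : f ∘ f = f)
    (hreg : ∀ i, ∀ x, fs i x ≤ x)
    (hidem : ∀ i, fs i ∘ fs i = fs i)
    (hcomp : f = (List.ofFn fs).foldr (· ∘ ·) id) :
    Set.range f = ⋂ i, Set.range (fs i) := by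
  have hregL : ∀ g ∈ List.ofFn fs, ∀ x, g x ≤ x := List.forall_mem_ofFn_iff.2 hreg
  calc Set.range f = fixedPoints f := range_eq_fixedPoints_of_comp_self hfidem
    _ = ⋂ i, fixedPoints (fs i) := by
      ext y
      rw [mem_fixedPoints, hcomp, isFixedPt_foldr_comp_iff hregL, List.forall_mem_ofFn_iff,
        Set.mem_iInter]
      rfl
    _ = ⋂ i, Set.range (fs i) :=
      Set.iInter_congr fun i => (range_eq_fixedPoints_of_comp_self (hidem i)).symm

/-- If `f = f₁ ∘ ⋯ ∘ f_k` with `f` and each `f_i` idempotent regressive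
order-preserving endomorphisms of a finite poset `K`, then
`im f = ⋂ i, im (f_i)`. -/
theorem stmt_1 {K : Type*} [PartialOrder K] [Fintype K]
    (k : ℕ) (f : K → K) (fs : Fin k → K → K)
    (hfreg : ∀ x, f x ≤ x) (hfmono : Monotone f) (hfidem : f ∘ f = f)
    (hreg : ∀ i, ∀ x, fs i x ≤ x) (hmono : ∀ i, Monotone (fs i))
    (hidem : ∀ i, fs i ∘ fs i = fs i)
    (hcomp : f = (List.ofFn fs).foldr (· ∘ ·) id) :
    Set.range f = ⋂ i, Set.range (fs i) :=
  stmt_1_general k f fs hfidem hreg hidem hcomp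
end

section
/- Let K be a finite poset and f = f_1 ∘ ... ∘ f_k with f, f_1, ..., f_k regressive order-preserving endomorphisms of K. Then the following are equivalent: (1) f is idempotent; (2) f_i ∘ f = f for all i; (3) f ∘ f_i = f for all i. -/
/-! A composite `f = f₁ ∘ ⋯ ∘ f_k` of regressive maps fixes a point exactly when every `f_i`
does, since each factor can only move the point down and nothing moves it back up. Applied to
the points `f x`, this says that `f` is idempotent iff `f_i ∘ f = f` for all `i`. If `f ∘ f_i = f`
for all `i`, the factors are absorbed one at a time and `f ∘ f = f`. Conversely, for idempotent
`f` the fixed-point property gives `f x = f_i (f x) ≤ f_i x`, so that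
`f x = f (f x) ≤ f (f_i x) ≤ f x`. -/

namespace List

variable {α : Type*}

theorem foldr_comp_apply_le [Preorder α] {l : List (α → α)} (hl : ∀ g ∈ l, ∀ x, g x ≤ x)
    (x : α) : l.foldr (· ∘ ·) id x ≤ x := by
  induction l with
  | nil => exact le_rfl
  | cons g t ih =>
    rw [forall_mem_cons] at hl
    exact (hl.1 _).trans (ih hl.2)

theorem monotone_foldr_comp [Preorder α] {l : List (α → α)} (hl : ∀ g ∈ l, Monotone g) :
    Monotone (l.foldr (· ∘ ·) id) := by
  induction l with
  | nil => exact monotone_id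
  | cons g t ih =>
    rw [forall_mem_cons] at hl
    exact hl.1.comp (ih hl.2)

theorem comp_foldr_comp_eq {f : α → α} {l : List (α → α)} (hl : ∀ g ∈ l, f ∘ g = f) :
    f ∘ l.foldr (· ∘ ·) id = f := by
  induction l with
  | nil => rfl
  | cons g t ih =>
    rw [forall_mem_cons] at hl
    rw [foldr_cons, ← Function.comp_assoc, hl.1, ih hl.2]

end List

section Regressive

variable {α : Type*} [PartialOrder α]

theorem apply_apply_eq_self_iff_of_le {g h : α → α} (hg : ∀ x, g x ≤ x) (hh : ∀ x, h x ≤ x)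
    {y : α} : g (h y) = y ↔ g y = y ∧ h y = y := by
  constructor
  · intro hy
    have hhy : h y = y := le_antisymm (hh y) (hy.ge.trans (hg _))
    exact ⟨by rwa [hhy] at hy, hhy⟩
  · rintro ⟨hgy, hhy⟩
    rw [hhy, hgy]

theorem List.foldr_comp_apply_eq_self_iff {l : List (α → α)} (hl : ∀ g ∈ l, ∀ x, g x ≤ x)
    {y : α} : l.foldr (· ∘ ·) id y = y ↔ ∀ g ∈ l, g y = y := by
  induction l with
  | nil => simp
  | cons g t ih =>
    rw [List.forall_mem_cons] at hl ⊢
    rw [List.foldr_cons, Function.comp_apply,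
      apply_apply_eq_self_iff_of_le hl.1 (List.foldr_comp_apply_le hl.2), ih hl.2]

theorem List.foldr_comp_idempotent_iff {l : List (α → α)} (hl : ∀ g ∈ l, ∀ x, g x ≤ x) :
    l.foldr (· ∘ ·) id ∘ l.foldr (· ∘ ·) id = l.foldr (· ∘ ·) id ↔
      ∀ g ∈ l, g ∘ l.foldr (· ∘ ·) id = l.foldr (· ∘ ·) id := by
  simp only [funext_iff, Function.comp_apply, foldr_comp_apply_eq_self_iff hl]
  exact ⟨fun h g hg x => h x g hg, fun h x g hg => h g hg x⟩

theorem comp_eq_of_idempotent_of_comp_eq {f g : α → α} (hf : ∀ x, f x ≤ x) (hf' : Monotone f)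
    (hidem : f ∘ f = f) (hg : ∀ x, g x ≤ x) (hg' : Monotone g) (hgf : g ∘ f = f) :
    f ∘ g = f := by
  funext x
  have hfg : f x ≤ g x := calc
    f x = g (f x) := (congrFun hgf x).symm
    _ ≤ g x := hg' (hf x)
  refine le_antisymm (hf' (hg x)) ?_
  calc f x = f (f x) := (congrFun hidem x).symm
    _ ≤ f (g x) := hf' hfg

end Regressive

theorem stmt_2_general {K : Type*} [PartialOrder K]
    (k : ℕ) (f : K → K) (fs : Fin k → K → K)
    (hreg : ∀ i, ∀ x, fs i x ≤ x) (hmono : ∀ i, Monotone (fs i))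
    (hcomp : f = (List.ofFn fs).foldr (· ∘ ·) id) :
    (f ∘ f = f ↔ ∀ i, fs i ∘ f = f) ∧ (f ∘ f = f ↔ ∀ i, f ∘ fs i = f) := by
  have hl_reg : ∀ g ∈ List.ofFn fs, ∀ x, g x ≤ x := List.forall_mem_ofFn_iff.2 hreg
  have hl_mono : ∀ g ∈ List.ofFn fs, Monotone g := List.forall_mem_ofFn_iff.2 hmono
  have hf_reg : ∀ x, f x ≤ x := hcomp ▸ List.foldr_comp_apply_le hl_reg
  have hf_mono : Monotone f := hcomp ▸ List.monotone_foldr_comp hl_mono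
  have hidem_iff : f ∘ f = f ↔ ∀ i, fs i ∘ f = f := by
    rw [← List.forall_mem_ofFn_iff (P := fun g => g ∘ f = f), hcomp]
    exact List.foldr_comp_idempotent_iff hl_reg
  refine ⟨hidem_iff, fun hidem i => ?_, fun h => ?_⟩
  · exact comp_eq_of_idempotent_of_comp_eq hf_reg hf_mono hidem (hreg i) (hmono i)
      (hidem_iff.1 hidem i)
  · nth_rewrite 2 [hcomp]
    exact List.comp_foldr_comp_eq (List.forall_mem_ofFn_iff.2 h)

/-- For `f = f₁ ∘ ⋯ ∘ f_k` regressive order-preserving endomorphisms of a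
finite poset, the following are equivalent: `f` idempotent; `f_i ∘ f = f` for all `i`;
`f ∘ f_i = f` for all `i`. -/
theorem stmt_2 {K : Type*} [PartialOrder K] [Fintype K]
    (k : ℕ) (f : K → K) (fs : Fin k → K → K)
    (hfreg : ∀ x, f x ≤ x) (hfmono : Monotone f)
    (hreg : ∀ i, ∀ x, fs i x ≤ x) (hmono : ∀ i, Monotone (fs i))
    (hcomp : f = (List.ofFn fs).foldr (· ∘ ·) id) :
    (f ∘ f = f ↔ ∀ i, fs i ∘ f = f) ∧ (f ∘ f = f ↔ ∀ i, f ∘ fs i = f) :=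
  stmt_2_general k f fs hreg hmono hcomp
end

section
/- For a finite poset K, the poset of idempotents of Or(K), ordered by P ≤ Q iff PQ = QP = Q, is a lattice (it has a minimum id_K, and any two elements have a join). -/
/-! The iterates of a regressive map `f` on a finite poset form an antitone, hence eventually
constant, sequence in the finite poset `K → K`; their limit `T` is idempotent and absorbs `f` on
both sides. For `f = P ∘ Q` the sandwich `P ∘ Q ≤ P, Q ≤ id` transfers this absorption to `P` and
`Q`, so `T` is an upper bound of `P` and `Q`; and anything absorbing `P` and `Q` absorbs every
iterate of `P ∘ Q`, so `T` is the least one. -/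

/-- The set of idempotent regressive order-preserving endomorphisms of `K`. -/
def IdemOr (K : Type*) [PartialOrder K] : Set (K → K) :=
  {f | (∀ x, f x ≤ x) ∧ Monotone f ∧ f ∘ f = f}

/-- The order on idempotents: `P ≤ Q` iff `P ∘ Q = Q ∘ P = Q`. -/
def idemLe {K : Type*} (P Q : K → K) : Prop := P ∘ Q = Q ∧ Q ∘ P = Q

open Function

section Regressive

variable {α : Type*} [PartialOrder α]

theorem exists_iterate_stable [Finite α] {f : α → α} (hf : f ≤ id) :
    ∃ n, f ∘ f^[n] = f^[n] ∧ f^[n] ∘ f = f^[n] ∧ f^[n] ∘ f^[n] = f^[n] := by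
  obtain ⟨n, hn⟩ := WellFoundedLT.antitone_chain_condition (antitone_iterate_of_le_id hf)
  refine ⟨n, ?_, ?_, ?_⟩
  · rw [← iterate_succ', ← hn (n + 1) n.le_succ]
  · rw [← iterate_succ, ← hn (n + 1) n.le_succ]
  · rw [← iterate_add, ← hn (n + n) (n.le_add_left n)]

theorem comp_eq_self_of_le_of_le_id {f g T : α → α} (hfg : f ≤ g) (hg : g ≤ id)
    (hT : f ∘ T = T) : g ∘ T = T := by
  funext x
  refine le_antisymm (hg (T x)) ?_
  calc T x = f (T x) := (congrFun hT x).symm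
    _ ≤ g (T x) := hfg (T x)

theorem Monotone.comp_eq_self_of_le_of_le_id {f g T : α → α} (hTm : Monotone T) (hfg : f ≤ g)
    (hg : g ≤ id) (hT : T ∘ f = T) : T ∘ g = T := by
  funext x
  refine le_antisymm (hTm (hg x)) ?_
  calc T x = T (f x) := (congrFun hT x).symm
    _ ≤ T (g x) := hTm (hfg x)

end Regressive

theorem iterate_comp_eq_of_comp_eq {α : Type*} {f U : α → α} (h : f ∘ U = U) (n : ℕ) :
    f^[n] ∘ U = U :=
  funext fun x => iterate_fixed (congrFun h x) n

theorem comp_iterate_eq_of_comp_eq {α : Type*} {f U : α → α} (h : U ∘ f = U) (n : ℕ) :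
    U ∘ f^[n] = U := by
  induction n with
  | zero => rfl
  | succ n ih => rw [iterate_succ, ← comp_assoc, ih, h]

theorem IdemOr.exists_join {K : Type*} [PartialOrder K] [Finite K] {P Q : K → K}
    (hP : P ∈ IdemOr K) (hQ : Q ∈ IdemOr K) :
    ∃ T ∈ IdemOr K, idemLe P T ∧ idemLe Q T ∧ ∀ U, idemLe P U → idemLe Q U → idemLe T U := by
  obtain ⟨hPr, hPm, -⟩ := hP
  obtain ⟨hQr, hQm, -⟩ := hQ
  have hPQ_le_P : P ∘ Q ≤ P := fun x => hPm (hQr x)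
  have hPQ_le_Q : P ∘ Q ≤ Q := fun x => hPr (Q x)
  have hPQ_le_id : P ∘ Q ≤ id := fun x => (hPQ_le_Q x).trans (hQr x)
  obtain ⟨n, hfT, hTf, hTT⟩ := exists_iterate_stable hPQ_le_id
  have hTm : Monotone (P ∘ Q)^[n] := (hPm.comp hQm).iterate n
  refine ⟨(P ∘ Q)^[n], ⟨iterate_le_id_of_le_id hPQ_le_id n, hTm, hTT⟩,
    ⟨comp_eq_self_of_le_of_le_id hPQ_le_P hPr hfT,
      hTm.comp_eq_self_of_le_of_le_id hPQ_le_P hPr hTf⟩,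
    ⟨comp_eq_self_of_le_of_le_id hPQ_le_Q hQr hfT,
      hTm.comp_eq_self_of_le_of_le_id hPQ_le_Q hQr hTf⟩, ?_⟩
  rintro U ⟨hPU, hUP⟩ ⟨hQU, hUQ⟩
  refine ⟨iterate_comp_eq_of_comp_eq ?_ n, comp_iterate_eq_of_comp_eq ?_ n⟩
  · rw [comp_assoc, hQU, hPU]
  · rw [← comp_assoc, hUP, hUQ]

/-- The poset of idempotents of `Or(K)`, ordered by `P ≤ Q` iff
`PQ = QP = Q`, is a lattice: `id` is its minimum and any two elements have a join. -/
theorem stmt_3 {K : Type*} [PartialOrder K] [Fintype K] :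
    (∀ P ∈ IdemOr K, idemLe (id : K → K) P) ∧
    (∀ P ∈ IdemOr K, ∀ Q ∈ IdemOr K, ∃ T ∈ IdemOr K,
      idemLe P T ∧ idemLe Q T ∧
      ∀ U ∈ IdemOr K, idemLe P U → idemLe Q U → idemLe T U) := by
  refine ⟨fun P _ => ⟨id_comp P, comp_id P⟩, fun _ hP _ hQ => ?_⟩
  obtain ⟨T, hT, hPT, hQT, hlub⟩ := IdemOr.exists_join hP hQ
  exact ⟨T, hT, hPT, hQT, fun U _ => hlub U⟩
end

section
/- Let K be a finite poset and P ∈ Or(K) idempotent. Then for all x, y ∈ im(P) with x ≤ y, μ_{im(P)}(x, y) = Σ_{z ∈ [x,y], P(z) = x} μ_K(z, y), where μ denotes the Möbius function. -/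
/-!
For `x ∈ im P` let `f w = ∑_{z ≤ w, P z = x} μ_K(z, w)`. By Möbius inversion in `K`,
`∑_{w ≤ y} f w = [P y = x]` for every `y`. This partial sum does not change when `y` is replaced
by `P y`, and since every fixed point below `y` lies below `P y`, induction on `w` shows that `f`
vanishes outside `im P`. So for `y ∈ im P` the sum of `f` over `[x, y] ∩ im P` is `δ(x, y)`, which
is the recursion determining `μ_{im P}(x, y)`.
-/

open Finset

section ClosureMobius

open scoped Classical

variable {K : Type*} [PartialOrder K] [Fintype K]

theorem sum_filter_and_le_eq_add {M : Type*} [AddCommMonoid M] (p : K → Prop) [DecidablePred p]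
    (g : K → M) {y : K} (hy : p y) :
    ∑ z ∈ univ.filter (fun z => p z ∧ z ≤ y), g z
      = g y + ∑ z ∈ univ.filter (fun z => p z ∧ z < y), g z := by
  rw [← sum_insert (by simp)]
  congr 1
  ext z
  simp only [mem_filter, mem_univ, true_and, mem_insert, le_iff_lt_or_eq]
  constructor
  · rintro ⟨hz, hlt | rfl⟩
    exacts [Or.inr ⟨hz, hlt⟩, Or.inl rfl]
  · rintro (rfl | ⟨hz, hlt⟩)
    exacts [⟨hy, Or.inr rfl⟩, ⟨hz, Or.inl hlt⟩]

theorem sum_mobius_eq_ite (μ : K → K → ℤ) (hμ1 : ∀ x, μ x x = 1)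
    (hμ2 : ∀ x y, x < y → μ x y = -∑ z ∈ univ.filter (fun z => x ≤ z ∧ z < y), μ x z)
    {x y : K} (hxy : x ≤ y) :
    ∑ z ∈ univ.filter (fun z => x ≤ z ∧ z ≤ y), μ x z = if x = y then 1 else 0 := by
  rw [sum_filter_and_le_eq_add (x ≤ ·) _ hxy]
  rcases hxy.eq_or_lt with rfl | hlt
  · have hempty : ∀ z ∈ univ.filter (fun z => x ≤ z ∧ z < x), μ x z = 0 := fun z hz =>
      absurd (mem_filter.1 hz).2 fun ⟨hxz, hzx⟩ => hzx.not_ge hxz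
    rw [hμ1, if_pos rfl, sum_eq_zero hempty, add_zero]
  · rw [hμ2 x y hlt, if_neg hlt.ne]
    simp

noncomputable def fiberMobius (P : K → K) (μ : K → K → ℤ) (x w : K) : ℤ :=
  ∑ z ∈ univ.filter (fun z => x ≤ z ∧ z ≤ w ∧ P z = x), μ z w

theorem fiberMobius_eq_zero_of_not_le (P : K → K) (μ : K → K → ℤ) {x w : K} (h : ¬ x ≤ w) :
    fiberMobius P μ x w = 0 :=
  sum_eq_zero fun z hz => by
    simp only [mem_filter, mem_univ, true_and] at hz
    exact absurd (hz.1.trans hz.2.1) h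

theorem sum_fiberMobius_le (P : K → K) (hreg : ∀ x, P x ≤ x) (μ : K → K → ℤ)
    (hμ : ∀ x y, x ≤ y → ∑ z ∈ univ.filter (fun z => x ≤ z ∧ z ≤ y), μ x z
      = if x = y then 1 else 0)
    (x y : K) :
    ∑ w ∈ univ.filter (· ≤ y), fiberMobius P μ x w = if P y = x then 1 else 0 := by
  unfold fiberMobius
  rw [sum_comm' (t' := univ.filter (fun z => x ≤ z ∧ z ≤ y ∧ P z = x))
    (s' := fun z => univ.filter (fun w => z ≤ w ∧ w ≤ y))]
  · rw [sum_congr rfl fun z hz => hμ z y (mem_filter.1 hz).2.2.1, sum_ite_eq']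
    simp only [mem_filter, mem_univ, true_and, le_refl]
    exact if_congr ⟨And.right, fun h => ⟨h ▸ hreg y, h⟩⟩ rfl rfl
  · intro w z
    simp only [mem_filter, mem_univ, true_and]
    constructor
    · rintro ⟨hwy, hxz, hzw, hPz⟩
      exact ⟨⟨hzw, hwy⟩, hxz, hzw.trans hwy, hPz⟩
    · rintro ⟨⟨hzw, hwy⟩, hxz, -, hPz⟩
      exact ⟨hwy, hxz, hzw, hPz⟩

theorem eq_zero_of_sum_le_eq_sum_le_map {M : Type*} [AddCommGroup M] (P : K → K)
    (hreg : ∀ x, P x ≤ x) (hmono : Monotone P) (g : K → M)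
    (hg : ∀ w, ∑ u ∈ univ.filter (· ≤ w), g u = ∑ u ∈ univ.filter (· ≤ P w), g u)
    {w : K} (hw : P w ≠ w) : g w = 0 := by
  induction w using WellFoundedLT.induction with
  | _ w ih =>
  have hsub : univ.filter (· ≤ P w) ⊆ univ.filter (· ≤ w) := by
    intro u
    simpa using fun hu => hu.trans (hreg w)
  have hdiff := sum_sdiff (f := g) hsub
  rw [← hg w, add_eq_right] at hdiff
  rw [← hdiff, sum_eq_single_of_mem w (by simpa using fun h => hw (h.antisymm' (hreg w)))]
  intro u hu huw
  simp only [mem_sdiff, mem_filter, mem_univ, true_and] at hu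
  refine ih u (hu.1.lt_of_ne huw) fun hPu => hu.2 ?_
  exact hPu ▸ hmono hu.1

theorem fiberMobius_eq_zero_of_map_ne (P : K → K) (hreg : ∀ x, P x ≤ x) (hmono : Monotone P)
    (hidem : ∀ x, P (P x) = P x) (μ : K → K → ℤ)
    (hμ : ∀ x y, x ≤ y → ∑ z ∈ univ.filter (fun z => x ≤ z ∧ z ≤ y), μ x z
      = if x = y then 1 else 0)
    (x : K) {w : K} (hw : P w ≠ w) : fiberMobius P μ x w = 0 :=
  eq_zero_of_sum_le_eq_sum_le_map P hreg hmono (fiberMobius P μ x)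
    (fun w => by rw [sum_fiberMobius_le P hreg μ hμ, sum_fiberMobius_le P hreg μ hμ, hidem]) hw

theorem sum_fiberMobius_fixed (P : K → K) (hreg : ∀ x, P x ≤ x) (hmono : Monotone P)
    (hidem : ∀ x, P (P x) = P x) (μ : K → K → ℤ)
    (hμ : ∀ x y, x ≤ y → ∑ z ∈ univ.filter (fun z => x ≤ z ∧ z ≤ y), μ x z
      = if x = y then 1 else 0)
    {x y : K} (hy : P y = y) :
    ∑ u ∈ univ.filter (fun u => (u ∈ Set.range P ∧ x ≤ u) ∧ u ≤ y), fiberMobius P μ x u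
      = if x = y then 1 else 0 := by
  have hsub :
      univ.filter (fun u => (u ∈ Set.range P ∧ x ≤ u) ∧ u ≤ y) ⊆ univ.filter (· ≤ y) := by
    intro u
    simp only [mem_filter, mem_univ, true_and]
    exact And.right
  rw [sum_subset hsub, sum_fiberMobius_le P hreg μ hμ, hy]
  · exact if_congr eq_comm rfl rfl
  intro u hu hnu
  simp only [mem_filter, mem_univ, true_and] at hu hnu
  by_cases hxu : x ≤ u
  · exact fiberMobius_eq_zero_of_map_ne P hreg hmono hidem μ hμ x
      fun hPu => hnu ⟨⟨⟨u, hPu⟩, hxu⟩, hu⟩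
  · exact fiberMobius_eq_zero_of_not_le P μ hxu

theorem eq_of_mobius_recursion (S : Set K) [DecidablePred (· ∈ S)] (μ : K → K → ℤ) {x : K}
    (h1 : μ x x = 1)
    (h2 : ∀ y ∈ S, x < y → μ x y = -∑ z ∈ univ.filter (fun z => z ∈ S ∧ x ≤ z ∧ z < y), μ x z)
    (φ : K → ℤ)
    (hφ : ∀ y ∈ S, x ≤ y →
      ∑ z ∈ univ.filter (fun z => (z ∈ S ∧ x ≤ z) ∧ z ≤ y), φ z = if x = y then 1 else 0)
    {y : K} (hy : y ∈ S) (hxy : x ≤ y) : μ x y = φ y := by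
  induction y using WellFoundedLT.induction with
  | _ y ih =>
  have hsum := hφ y hy hxy
  rw [sum_filter_and_le_eq_add (fun z => z ∈ S ∧ x ≤ z) φ ⟨hy, hxy⟩] at hsum
  rcases hxy.eq_or_lt with rfl | hlt
  · have hempty : ∀ z ∈ univ.filter (fun z => (z ∈ S ∧ x ≤ z) ∧ z < x), φ z = 0 := fun z hz =>
      absurd (mem_filter.1 hz).2 fun ⟨⟨_, hxz⟩, hzx⟩ => hzx.not_ge hxz
    rw [sum_eq_zero hempty, add_zero, if_pos rfl] at hsum
    rw [h1, hsum]
  · rw [if_neg hlt.ne, ← eq_neg_iff_add_eq_zero] at hsum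
    rw [h2 y hy hlt, hsum, neg_inj]
    simp only [← and_assoc]
    refine sum_congr rfl fun z hz => ?_
    simp only [mem_filter, mem_univ, true_and] at hz
    exact ih z hz.2 hz.1.1 hz.1.2

end ClosureMobius

open scoped Classical in
theorem stmt_5_general {K : Type*} [PartialOrder K] [Fintype K]
    (P : K → K) (hreg : ∀ x, P x ≤ x) (hmono : Monotone P) (hidem : P ∘ P = P)
    (μK : K → K → ℤ)
    (hμK1 : ∀ x : K, μK x x = 1)
    (hμK2 : ∀ x y : K, x < y →
      μK x y = -∑ z ∈ Finset.univ.filter (fun z => x ≤ z ∧ z < y), μK x z)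
    (μI : K → K → ℤ)
    (hμI1 : ∀ x ∈ Set.range P, μI x x = 1)
    (hμI2 : ∀ x ∈ Set.range P, ∀ y ∈ Set.range P, x < y →
      μI x y = -∑ z ∈ Finset.univ.filter (fun z => z ∈ Set.range P ∧ x ≤ z ∧ z < y),
        μI x z) :
    ∀ x ∈ Set.range P, ∀ y ∈ Set.range P, x ≤ y →
      μI x y = ∑ z ∈ Finset.univ.filter (fun z => x ≤ z ∧ z ≤ y ∧ P z = x), μK z y := by
  intro x hx y hy hxy
  have hPP : ∀ a, P (P a) = P a := congrFun hidem
  refine eq_of_mobius_recursion (Set.range P) μI (hμI1 x hx) (hμI2 x hx) (fiberMobius P μK x)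
    ?_ hy hxy
  rintro _ ⟨w, rfl⟩ -
  exact sum_fiberMobius_fixed P hreg hmono hPP μK
    (fun _ _ => sum_mobius_eq_ite μK hμK1 hμK2) (hPP w)

open scoped Classical in
/-- For an idempotent `P ∈ Or(K)` on a finite poset `K`, with `μK` the
Möbius function of `K` and `μI` the Möbius function of the induced subposet `im(P)`,
`μI x y = ∑_{z ∈ [x,y], P z = x} μK z y` for all `x ≤ y` in `im(P)`. -/
theorem stmt_5 {K : Type*} [PartialOrder K] [Fintype K]
    (P : K → K) (hreg : ∀ x, P x ≤ x) (hmono : Monotone P) (hidem : P ∘ P = P)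
    (μK : K → K → ℤ)
    (hμK1 : ∀ x : K, μK x x = 1)
    (hμK2 : ∀ x y : K, x < y →
      μK x y = -∑ z ∈ Finset.univ.filter (fun z => x ≤ z ∧ z < y), μK x z)
    (hμK3 : ∀ x y : K, ¬ x ≤ y → μK x y = 0)
    (μI : K → K → ℤ)
    (hμI1 : ∀ x ∈ Set.range P, μI x x = 1)
    (hμI2 : ∀ x ∈ Set.range P, ∀ y ∈ Set.range P, x < y →
      μI x y = -∑ z ∈ Finset.univ.filter (fun z => z ∈ Set.range P ∧ x ≤ z ∧ z < y),
        μI x z)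
    (hμI3 : ∀ x ∈ Set.range P, ∀ y ∈ Set.range P, ¬ x ≤ y → μI x y = 0) :
    ∀ x ∈ Set.range P, ∀ y ∈ Set.range P, x ≤ y →
      μI x y = ∑ z ∈ Finset.univ.filter (fun z => x ≤ z ∧ z ≤ y ∧ P z = x), μK z y :=
  stmt_5_general P hreg hmono hidem μK hμK1 hμK2 μI hμI1 hμI2
end

section
/- Let K be a finite Eulerian poset with rank function ρ and P ∈ Or(K) a projection. Then for x, y ∈ im(P) with x ≤ y: μ_{im(P)}(x,y) = (-1)^{ρ(y)-ρ(x)} if the interval [x,y] of K is contained in im(P), and μ_{im(P)}(x,y) = 0 otherwise. -/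
/-!
Write `ε z = (-1) ^ ρ z`. Since `μ_K(x, z) = ε x ε z`, the Möbius identity of `K` says that
`∑_{z ∈ [u, v]} ε z = 0` whenever `u < v`. Splitting an interval `[w, y]` of `K` into the fibres
of `P` shows that `v ↦ ε y · ∑_{z ≤ y, P z = v} ε z` satisfies the identity characterising
`μ_{im P}(·, y)`, so `μ_{im P}(x, y)` is `ε y` times the `ε`-sum over the fibre of `x` in `[x, y]`.
If `[x, y] ⊆ im P` that fibre is `{x}`. Otherwise it is an interval `[x, b]` with `b ≠ x`, over
which the `ε`-sum vanishes: take `z ∈ [x, y]` minimal with `P z ≠ z`; if `P z ≠ x`, then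
`P z ⋖ z`, and for any `u ≥ x` with `u ⋖ P z` the rank-two interval `[u, z]` must contain a
second middle element `t`, which is fixed by minimality, so `t < P z` although both have the
same rank.
-/

open Finset

theorem neg_one_pow_sub_eq_mul {a b : ℕ} (h : a ≤ b) :
    (-1 : ℤ) ^ (b - a) = (-1) ^ b * (-1) ^ a := by
  obtain ⟨d, rfl⟩ := Nat.exists_eq_add_of_le h
  rw [Nat.add_sub_cancel_left, pow_add, mul_right_comm, pow_mul_pow_eq_one a (by norm_num),
    one_mul]

theorem apply_eq_self_of_mem_range {α : Type*} {P : α → α} (hidem : P ∘ P = P) {x : α}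
    (hx : x ∈ Set.range P) : P x = x := by
  obtain ⟨u, rfl⟩ := hx
  exact congrFun hidem u

section

variable {K : Type*} [PartialOrder K] [Fintype K]

theorem strictMono_of_forall_covBy_eq_add_one {ρ : K → ℕ}
    (hρ : ∀ x y : K, x ⋖ y → ρ y = ρ x + 1) : StrictMono ρ := by
  classical
  let _ := Fintype.toLocallyFiniteOrder (α := K)
  exact (strictMono_iff_forall_covBy ρ).2 fun a b h => by rw [hρ a b h]; omega

open scoped Classical

def IsMoebiusOn (s : Set K) [DecidablePred (· ∈ s)] (μ : K → K → ℤ) : Prop :=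
  (∀ x ∈ s, μ x x = 1) ∧
    ∀ x ∈ s, ∀ y ∈ s, x < y → μ x y = -∑ z ∈ {z | z ∈ s ∧ x ≤ z ∧ z < y}, μ x z

namespace IsMoebiusOn

variable {s : Set K} [DecidablePred (· ∈ s)] {μ : K → K → ℤ}

theorem sum_Icc_eq_ite (hμ : IsMoebiusOn s μ) {x y : K} (hx : x ∈ s) (hy : y ∈ s) (hxy : x ≤ y) :
    ∑ z ∈ {z | z ∈ s ∧ x ≤ z ∧ z ≤ y}, μ x z = if x = y then 1 else 0 := by
  rcases hxy.eq_or_lt with rfl | hlt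
  · have hsingle : ({z | z ∈ s ∧ x ≤ z ∧ z ≤ x} : Finset K) = ({x} : Finset K) := by
      ext z
      simp only [mem_filter, mem_univ, true_and, mem_singleton]
      exact ⟨fun h => le_antisymm h.2.2 h.2.1, by rintro rfl; exact ⟨hx, le_rfl, le_rfl⟩⟩
    rw [hsingle, sum_singleton, hμ.1 x hx, if_pos rfl]
  · have hsplit : ({z | z ∈ s ∧ x ≤ z ∧ z ≤ y} : Finset K) =
        insert y ({z | z ∈ s ∧ x ≤ z ∧ z < y} : Finset K) := by
      ext z
      simp only [mem_filter, mem_univ, true_and, mem_insert]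
      constructor
      · rintro ⟨hz, hxz, hzy⟩
        exact hzy.eq_or_lt.imp id fun h => ⟨hz, hxz, h⟩
      · rintro (rfl | ⟨hz, hxz, hzy⟩)
        exacts [⟨hy, hlt.le, le_rfl⟩, ⟨hz, hxz, hzy.le⟩]
    rw [hsplit, sum_insert (by simp), hμ.2 x hx y hy hlt, if_neg hlt.ne]
    ring

theorem eq_of_sum_Icc_eq_ite (hμ : IsMoebiusOn s μ) {y : K} (hy : y ∈ s) (h : K → ℤ)
    (hh : ∀ w ∈ s, w ≤ y → ∑ v ∈ {v | v ∈ s ∧ w ≤ v ∧ v ≤ y}, h v = if w = y then 1 else 0)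
    {x : K} (hx : x ∈ s) (hxy : x ≤ y) : μ x y = h x := by
  have hswap : ∀ u v : K, u ∈ ({u | u ∈ s ∧ x ≤ u ∧ u ≤ y} : Finset K) ∧
      v ∈ ({v | v ∈ s ∧ u ≤ v ∧ v ≤ y} : Finset K) ↔
      u ∈ ({u | u ∈ s ∧ x ≤ u ∧ u ≤ v} : Finset K) ∧
      v ∈ ({v | v ∈ s ∧ x ≤ v ∧ v ≤ y} : Finset K) := by
    intro u v
    simp only [mem_filter, mem_univ, true_and]
    exact ⟨fun ⟨⟨hu, hxu, _⟩, hv, huv, hvy⟩ => ⟨⟨hu, hxu, huv⟩, hv, hxu.trans huv, hvy⟩,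
      fun ⟨⟨hu, hxu, huv⟩, hv, _, hvy⟩ => ⟨⟨hu, hxu, huv.trans hvy⟩, hv, huv, hvy⟩⟩
  calc μ x y = ∑ u ∈ {u | u ∈ s ∧ x ≤ u ∧ u ≤ y}, μ x u * if u = y then 1 else 0 := by
        simp [hy, hxy]
    _ = ∑ u ∈ {u | u ∈ s ∧ x ≤ u ∧ u ≤ y}, ∑ v ∈ {v | v ∈ s ∧ u ≤ v ∧ v ≤ y}, μ x u * h v := by
        refine sum_congr rfl fun u hu => ?_
        simp only [mem_filter, mem_univ, true_and] at hu
        rw [← mul_sum, hh u hu.1 hu.2.2]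
    _ = ∑ v ∈ {v | v ∈ s ∧ x ≤ v ∧ v ≤ y}, ∑ u ∈ {u | u ∈ s ∧ x ≤ u ∧ u ≤ v}, μ x u * h v :=
        sum_comm' hswap
    _ = ∑ v ∈ {v | v ∈ s ∧ x ≤ v ∧ v ≤ y}, (if x = v then 1 else 0) * h v := by
        refine sum_congr rfl fun v hv => ?_
        simp only [mem_filter, mem_univ, true_and] at hv
        rw [← sum_mul, hμ.sum_Icc_eq_ite hx hv.1 hv.2.1]
    _ = h x := by simp [hx, hxy]

end IsMoebiusOn

theorem sum_sum_fiber_eq_sum_Icc {P : K → K} {M : Type*} [AddCommMonoid M] (hreg : ∀ x, P x ≤ x)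
    (hmono : Monotone P) {w y : K} (hw : P w = w) (f : K → M) :
    ∑ v ∈ {v | v ∈ Set.range P ∧ w ≤ v ∧ v ≤ y}, ∑ z ∈ {z | P z = v ∧ z ≤ y}, f z =
      ∑ z ∈ {z | w ≤ z ∧ z ≤ y}, f z := by
  rw [← sum_fiberwise_of_maps_to (s := {z | w ≤ z ∧ z ≤ y})
    (t := {v | v ∈ Set.range P ∧ w ≤ v ∧ v ≤ y}) (g := P)]
  · refine sum_congr rfl fun v hv => sum_congr ?_ fun _ _ => rfl
    ext z
    simp only [mem_filter, mem_univ, true_and] at hv ⊢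
    exact ⟨fun ⟨h1, h2⟩ => ⟨⟨hv.2.1.trans (h1 ▸ hreg z), h2⟩, h1⟩, fun ⟨⟨_, h2⟩, h1⟩ => ⟨h1, h2⟩⟩
  · intro z hz
    simp only [mem_filter, mem_univ, true_and] at hz ⊢
    exact ⟨⟨z, rfl⟩, hw ▸ hmono hz.1, (hreg z).trans hz.2⟩

theorem fiber_eq_singleton_of_Icc_subset_range {P : K → K} (hreg : ∀ x, P x ≤ x) (hidem : P ∘ P = P)
    {x y : K} (hx : P x = x) (hxy : x ≤ y) (hsub : Set.Icc x y ⊆ Set.range P) :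
    ({z | P z = x ∧ z ≤ y} : Finset K) = ({x} : Finset K) := by
  ext z
  simp only [mem_filter, mem_univ, true_and, mem_singleton]
  refine ⟨fun ⟨hPz, hzy⟩ => ?_, by rintro rfl; exact ⟨hx, hxy⟩⟩
  rw [← hPz, apply_eq_self_of_mem_range hidem (hsub ⟨hPz ▸ hreg z, hzy⟩)]

variable {ρ : K → ℕ}

theorem sum_Icc_neg_one_pow_eq_zero_of_moebius (hρ : Monotone ρ) {μ : K → K → ℤ}
    (hμ : IsMoebiusOn Set.univ μ) (hEuler : ∀ x y : K, x ≤ y → μ x y = (-1) ^ (ρ y - ρ x))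
    {x y : K} (hxy : x < y) : ∑ z ∈ {z | x ≤ z ∧ z ≤ y}, (-1 : ℤ) ^ ρ z = 0 := by
  have hsum := hμ.sum_Icc_eq_ite (Set.mem_univ x) (Set.mem_univ y) hxy.le
  simp only [Set.mem_univ, true_and, if_neg hxy.ne] at hsum
  have hscaled : (-1 : ℤ) ^ ρ x * ∑ z ∈ {z | x ≤ z ∧ z ≤ y}, (-1 : ℤ) ^ ρ z = 0 := by
    rw [mul_sum, ← hsum]
    refine sum_congr rfl fun z hz => ?_
    simp only [mem_filter, mem_univ, true_and] at hz
    rw [hEuler x z hz.1, neg_one_pow_sub_eq_mul (hρ hz.1), mul_comm]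
  exact (mul_eq_zero.1 hscaled).resolve_left (pow_ne_zero _ (by norm_num))

section Eulerian

variable (heul : ∀ x y : K, x < y → ∑ z ∈ {z | x ≤ z ∧ z ≤ y}, (-1 : ℤ) ^ ρ z = 0)
include heul

theorem sum_Icc_neg_one_pow {x y : K} (hxy : x ≤ y) :
    ∑ z ∈ {z | x ≤ z ∧ z ≤ y}, (-1 : ℤ) ^ ρ z = if x = y then (-1) ^ ρ x else 0 := by
  rcases hxy.eq_or_lt with rfl | hlt
  · have hsingle : ({z | x ≤ z ∧ z ≤ x} : Finset K) = ({x} : Finset K) := by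
      ext z
      simp [le_antisymm_iff, and_comm]
    rw [hsingle, sum_singleton, if_pos rfl]
  · rw [heul x y hlt, if_neg hlt.ne]

theorem exists_ne_of_covBy_of_covBy (hρ : ∀ x y : K, x ⋖ y → ρ y = ρ x + 1) {u w z : K}
    (huw : u ⋖ w) (hwz : w ⋖ z) : ∃ t, u < t ∧ t < z ∧ t ≠ w := by
  by_contra! h
  have huz : u < z := huw.lt.trans hwz.lt
  have hIcc : ({t | u ≤ t ∧ t ≤ z} : Finset K) = ({u, w, z} : Finset K) := by
    ext t
    simp only [mem_filter, mem_univ, true_and, mem_insert, mem_singleton]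
    constructor
    · rintro ⟨hut, htz⟩
      rcases hut.eq_or_lt with rfl | hut
      · exact Or.inl rfl
      rcases htz.eq_or_lt with rfl | htz
      · exact Or.inr (Or.inr rfl)
      exact Or.inr (Or.inl (h t hut htz))
    · rintro (rfl | rfl | rfl)
      exacts [⟨le_rfl, huz.le⟩, ⟨huw.le, hwz.le⟩, ⟨huz.le, le_rfl⟩]
  have hsum := heul u z huz
  rw [hIcc, sum_insert (by simp [huw.ne, huz.ne]), sum_pair hwz.ne, hρ _ _ hwz, hρ _ _ huw]
    at hsum
  exact pow_ne_zero (ρ u) (by norm_num : (-1 : ℤ) ≠ 0) (by linear_combination hsum)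

theorem IsMoebiusOn.eq_neg_one_pow_mul_sum_fiber {P : K → K} (hreg : ∀ x, P x ≤ x)
    (hmono : Monotone P) (hidem : P ∘ P = P) {μ : K → K → ℤ} (hμ : IsMoebiusOn (Set.range P) μ)
    {x y : K} (hx : x ∈ Set.range P) (hy : y ∈ Set.range P) (hxy : x ≤ y) :
    μ x y = (-1) ^ ρ y * ∑ z ∈ {z | P z = x ∧ z ≤ y}, (-1 : ℤ) ^ ρ z := by
  refine hμ.eq_of_sum_Icc_eq_ite hy
    (fun v => (-1) ^ ρ y * ∑ z ∈ {z | P z = v ∧ z ≤ y}, (-1 : ℤ) ^ ρ z) (fun w hw hwy => ?_) hx hxy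
  rw [← mul_sum, sum_sum_fiber_eq_sum_Icc hreg hmono (apply_eq_self_of_mem_range hidem hw),
    sum_Icc_neg_one_pow heul hwy]
  split_ifs with hwy
  · subst hwy
    exact pow_mul_pow_eq_one _ (by norm_num)
  · exact mul_zero _

theorem exists_lt_apply_eq_of_not_subset_range (hρ : ∀ x y : K, x ⋖ y → ρ y = ρ x + 1)
    {P : K → K} (hreg : ∀ x, P x ≤ x) (hmono : Monotone P) (hidem : P ∘ P = P) {x y : K}
    (hx : x ∈ Set.range P) (hxy : ¬ Set.Icc x y ⊆ Set.range P) :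
    ∃ z, x < z ∧ z ≤ y ∧ P z = x := by
  obtain ⟨z, hz⟩ := (Set.toFinite {v | v ∈ Set.Icc x y ∧ v ∉ Set.range P}).exists_minimal
    (Set.not_subset.1 hxy)
  obtain ⟨⟨hxz, hzy⟩, hzP⟩ := hz.prop
  have hfix : ∀ v, x ≤ v → v < z → P v = v := fun v hxv hvz =>
    apply_eq_self_of_mem_range hidem
      (by_contra fun hv => hz.not_prop_of_lt hvz ⟨⟨hxv, hvz.le.trans hzy⟩, hv⟩)
  have hxPz : x ≤ P z := apply_eq_self_of_mem_range hidem hx ▸ hmono hxz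
  have hPz : P z < z := (hreg z).lt_of_ne fun h => hzP ⟨z, h⟩
  rcases hxPz.eq_or_lt with hxPz | hxPz
  · exact ⟨z, hxPz ▸ hPz, hzy, hxPz.symm⟩
  have hcov : P z ⋖ z := ⟨hPz, fun s hs hsz => by
    have : s ≤ P z := hfix s (hxPz.trans hs).le hsz ▸ hmono hsz.le
    exact hs.not_ge this⟩
  obtain ⟨u, hxu, hu⟩ := exists_le_covBy_of_lt hxPz
  obtain ⟨t, hut, htz, ht⟩ := exists_ne_of_covBy_of_covBy heul hρ hu hcov
  have htPz : t < P z := (hfix t (hxu.trans hut.le) htz ▸ hmono htz.le).lt_of_ne ht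
  have hρmono := strictMono_of_forall_covBy_eq_add_one hρ
  have hρt : ρ u < ρ t ∧ ρ t < ρ (P z) := ⟨hρmono hut, hρmono htPz⟩
  rw [hρ _ _ hu] at hρt
  omega

theorem sum_neg_one_pow_fiber_eq_zero {P : K → K} (hreg : ∀ x, P x ≤ x) {x y a b : K}
    (hab : {z | x ≤ z ∧ z ≤ y ∧ P z = x} = Set.Icc a b) (hx : P x = x) {z : K} (hxz : x < z)
    (hzy : z ≤ y) (hPz : P z = x) :
    ∑ z ∈ {z | P z = x ∧ z ≤ y}, (-1 : ℤ) ^ ρ z = 0 := by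
  have hmem : ∀ v, P v = x ∧ v ≤ y ↔ v ∈ Set.Icc a b := fun v => by
    rw [← hab]
    exact ⟨fun ⟨h1, h2⟩ => ⟨h1 ▸ hreg v, h2, h1⟩, fun ⟨_, h2, h1⟩ => ⟨h1, h2⟩⟩
  have hfiber : ({v | P v = x ∧ v ≤ y} : Finset K) = ({v | a ≤ v ∧ v ≤ b} : Finset K) := by
    ext v
    simp only [mem_filter, mem_univ, true_and]
    exact hmem v
  have ha := ((hmem x).1 ⟨hx, hxz.le.trans hzy⟩).1
  have hb := ((hmem z).1 ⟨hPz, hzy⟩).2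
  rw [hfiber, heul a b (ha.trans_lt (hxz.trans_le hb))]

end Eulerian

end

open scoped Classical in
theorem stmt_6_general {K : Type*} [PartialOrder K] [Fintype K]
    (ρ : K → ℕ) (hρ : ∀ x y : K, x ⋖ y → ρ y = ρ x + 1)
    (μK : K → K → ℤ)
    (hμK1 : ∀ x : K, μK x x = 1)
    (hμK2 : ∀ x y : K, x < y →
      μK x y = -∑ z ∈ Finset.univ.filter (fun z => x ≤ z ∧ z < y), μK x z)
    (hEuler : ∀ x y : K, x ≤ y → μK x y = (-1) ^ (ρ y - ρ x))
    (P : K → K) (hreg : ∀ x, P x ≤ x) (hmono : Monotone P) (hidem : P ∘ P = P)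
    (hproj : ∀ x ∈ Set.range P, ∀ y ∈ Set.range P, x ≤ y →
      ∃ a b : K, {z : K | x ≤ z ∧ z ≤ y ∧ P z = x} = Set.Icc a b)
    (μI : K → K → ℤ)
    (hμI1 : ∀ x ∈ Set.range P, μI x x = 1)
    (hμI2 : ∀ x ∈ Set.range P, ∀ y ∈ Set.range P, x < y →
      μI x y = -∑ z ∈ Finset.univ.filter (fun z => z ∈ Set.range P ∧ x ≤ z ∧ z < y),
        μI x z) :
    ∀ x ∈ Set.range P, ∀ y ∈ Set.range P, x ≤ y →
      μI x y = if Set.Icc x y ⊆ Set.range P then (-1) ^ (ρ y - ρ x) else 0 := by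
  intro x hx y hy hxy
  have hρmono := (strictMono_of_forall_covBy_eq_add_one hρ).monotone
  have hK : IsMoebiusOn Set.univ μK :=
    ⟨fun x _ => hμK1 x, fun x _ y _ h => by simpa using hμK2 x y h⟩
  have heul : ∀ x y : K, x < y → ∑ z ∈ {z | x ≤ z ∧ z ≤ y}, (-1 : ℤ) ^ ρ z = 0 :=
    fun x y => sum_Icc_neg_one_pow_eq_zero_of_moebius hρmono hK hEuler
  have hPx : P x = x := apply_eq_self_of_mem_range hidem hx
  rw [IsMoebiusOn.eq_neg_one_pow_mul_sum_fiber heul hreg hmono hidem ⟨hμI1, hμI2⟩ hx hy hxy]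
  split_ifs with hsub
  · rw [fiber_eq_singleton_of_Icc_subset_range hreg hidem hPx hxy hsub, sum_singleton,
      neg_one_pow_sub_eq_mul (hρmono hxy)]
  · obtain ⟨z, hxz, hzy, hPz⟩ :=
      exists_lt_apply_eq_of_not_subset_range heul hρ hreg hmono hidem hx hsub
    obtain ⟨a, b, hab⟩ := hproj x hx y hy hxy
    rw [sum_neg_one_pow_fiber_eq_zero heul hreg hab hPx hxz hzy hPz, mul_zero]

open scoped Classical in
/-- For a projection `P ∈ Or(K)` of a finite Eulerian poset `K` with rank
function `ρ`, the Möbius function of the induced subposet `im(P)` satisfies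
`μI x y = (-1)^(ρ y - ρ x)` if `[x,y] ⊆ im(P)`, and `μI x y = 0` otherwise. -/
theorem stmt_6 {K : Type*} [PartialOrder K] [Fintype K] [OrderBot K] [OrderTop K]
    (ρ : K → ℕ) (hρbot : ρ ⊥ = 0) (hρ : ∀ x y : K, x ⋖ y → ρ y = ρ x + 1)
    (μK : K → K → ℤ)
    (hμK1 : ∀ x : K, μK x x = 1)
    (hμK2 : ∀ x y : K, x < y →
      μK x y = -∑ z ∈ Finset.univ.filter (fun z => x ≤ z ∧ z < y), μK x z)
    (hμK3 : ∀ x y : K, ¬ x ≤ y → μK x y = 0)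
    (hEuler : ∀ x y : K, x ≤ y → μK x y = (-1) ^ (ρ y - ρ x))
    (P : K → K) (hreg : ∀ x, P x ≤ x) (hmono : Monotone P) (hidem : P ∘ P = P)
    (hproj : ∀ x ∈ Set.range P, ∀ y ∈ Set.range P, x ≤ y →
      ∃ a b : K, {z : K | x ≤ z ∧ z ≤ y ∧ P z = x} = Set.Icc a b)
    (μI : K → K → ℤ)
    (hμI1 : ∀ x ∈ Set.range P, μI x x = 1)
    (hμI2 : ∀ x ∈ Set.range P, ∀ y ∈ Set.range P, x < y →
      μI x y = -∑ z ∈ Finset.univ.filter (fun z => z ∈ Set.range P ∧ x ≤ z ∧ z < y),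
        μI x z)
    (hμI3 : ∀ x ∈ Set.range P, ∀ y ∈ Set.range P, ¬ x ≤ y → μI x y = 0) :
    ∀ x ∈ Set.range P, ∀ y ∈ Set.range P, x ≤ y →
      μI x y = if Set.Icc x y ⊆ Set.range P then (-1) ^ (ρ y - ρ x) else 0 :=
  stmt_6_general ρ hρ μK hμK1 hμK2 hEuler P hreg hmono hidem hproj μI hμI1 hμI2
end

section
/- Let K be a finite Eulerian poset, P ∈ Or(K) a projection, and A := P^{-1}(0̂) ∩ atom(K). Then P^{-1}(0̂) = K_A, where K_A = {x ∈ K : every atom a ≤ x belongs to A}. -/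
/-!
Induct on `x`: if every atom below `x` lies in `A` but `P x ≠ ⊥`, then all `z < x` lie in
`P⁻¹(⊥)` while `x` is fixed by `P`, so the interval condition for `⊥ ≤ x` in `im P` says that
`[⊥, x)` is a closed interval `[⊥, b]`. If `b = ⊥`, then `x` is an atom outside `A`. Otherwise
the defining recursion of the Möbius function gives `μ(⊥, x) = -∑_{z ≤ b} μ(⊥, z) = 0`,
which is impossible in an Eulerian poset, where `μ(⊥, x) = ±1`.
-/

section Mobius

open scoped Classical

variable {K : Type*} [PartialOrder K] [Fintype K] (μ : K → K → ℤ)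

theorem mobius_eq_zero_of_Ico_eq_Icc
    (hμ : ∀ x y : K, x < y → μ x y = -∑ z ∈ Finset.univ.filter (fun z => x ≤ z ∧ z < y), μ x z)
    {x y b : K} (hxb : x < b) (h : Set.Ico x y = Set.Icc x b) : μ x y = 0 := by
  have hby : b < y := (h ▸ Set.right_mem_Icc.2 hxb.le : b ∈ Set.Ico x y).2
  have hIco : Finset.univ.filter (fun z => x ≤ z ∧ z < y)
      = insert b (Finset.univ.filter (fun z => x ≤ z ∧ z < b)) := by
    ext z
    have hz : (x ≤ z ∧ z < y) ↔ (x ≤ z ∧ z ≤ b) := Set.ext_iff.1 h z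
    simp only [Finset.mem_filter, Finset.mem_univ, true_and, Finset.mem_insert, hz]
    constructor
    · rintro ⟨hxz, hzb⟩
      exact hzb.eq_or_lt.imp id (⟨hxz, ·⟩)
    · rintro (rfl | ⟨hxz, hzb⟩)
      exacts [⟨hxb.le, le_rfl⟩, ⟨hxz, hzb.le⟩]
  rw [hμ x y (hxb.trans hby), hIco, Finset.sum_insert (by simp), hμ x b hxb]
  ring

theorem bot_covBy_of_Iio_eq_Icc [OrderBot K]
    (hμ : ∀ x y : K, x < y → μ x y = -∑ z ∈ Finset.univ.filter (fun z => x ≤ z ∧ z < y), μ x z)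
    {x a b : K} (hx : μ ⊥ x ≠ 0) (hbotx : ⊥ < x) (h : Set.Iio x = Set.Icc a b) : ⊥ ⋖ x := by
  have ha : a = ⊥ := le_bot_iff.1 (h ▸ hbotx : ⊥ ∈ Set.Icc a b).1
  subst ha
  rcases eq_or_lt_of_le (bot_le : ⊥ ≤ b) with rfl | hb
  · exact bot_covBy_iff.2 (Set.Iio_eq_singleton_bot_iff.1 (h.trans (Set.Icc_self ⊥)))
  · exact absurd (mobius_eq_zero_of_Ico_eq_Icc μ hμ hb (by simpa using h)) hx

end Mobius

section Projection

variable {K : Type*} [PartialOrder K] {P : K → K}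

theorem map_eq_self_of_forall_lt (hreg : ∀ x, P x ≤ x) (hidem : P ∘ P = P) {x c : K}
    (hlt : ∀ z < x, P z = c) (hx : P x ≠ c) : P x = x := by
  refine (hreg x).eq_or_lt.resolve_right fun hPx => hx ?_
  rw [← congrFun hidem x]
  exact hlt _ hPx

theorem setOf_le_map_eq_eq_Iio {x c : K} (hlt : ∀ z < x, P z = c) (hx : P x ≠ c)
    (hc : ∀ z < x, c ≤ z) :
    {z : K | c ≤ z ∧ z ≤ x ∧ P z = c} = Set.Iio x := by
  ext z
  constructor
  · rintro ⟨-, hzx, hPz⟩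
    exact hzx.lt_of_ne (by rintro rfl; exact hx hPz)
  · intro hzx
    exact ⟨hc z hzx, hzx.le, hlt z hzx⟩

end Projection

open scoped Classical in
theorem stmt_7_general {K : Type*} [PartialOrder K] [Fintype K] [OrderBot K]
    (ρ : K → ℕ)
    (μK : K → K → ℤ)
    (hμK2 : ∀ x y : K, x < y →
      μK x y = -∑ z ∈ Finset.univ.filter (fun z => x ≤ z ∧ z < y), μK x z)
    (hEuler : ∀ x y : K, x ≤ y → μK x y = (-1) ^ (ρ y - ρ x))
    (P : K → K) (hreg : ∀ x, P x ≤ x) (hmono : Monotone P) (hidem : P ∘ P = P)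
    (hproj : ∀ x ∈ Set.range P, ∀ y ∈ Set.range P, x ≤ y →
      ∃ a b : K, {z : K | x ≤ z ∧ z ≤ y ∧ P z = x} = Set.Icc a b)
    (A : Set K) (hA : A = {a : K | P a = ⊥ ∧ ⊥ ⋖ a}) :
    {x : K | P x = ⊥} = {x : K | ∀ a : K, ⊥ ⋖ a → a ≤ x → a ∈ A} := by
  subst hA
  have hPbot : P ⊥ = ⊥ := le_bot_iff.1 (hreg ⊥)
  ext x
  refine ⟨fun hx a ha hax => ⟨le_bot_iff.1 (hx ▸ hmono hax), ha⟩, fun hx => ?_⟩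
  induction x using WellFoundedLT.induction with
  | _ x IH =>
  have hlt : ∀ z < x, P z = ⊥ := fun z hzx => IH z hzx fun a ha haz => hx a ha (haz.trans hzx.le)
  by_contra hPx
  have hbotx : ⊥ < x := bot_lt_iff_ne_bot.2 (by rintro rfl; exact hPx hPbot)
  have hfix : P x = x := map_eq_self_of_forall_lt hreg hidem hlt hPx
  obtain ⟨a, b, hab⟩ := hproj ⊥ ⟨⊥, hPbot⟩ x ⟨x, hfix⟩ bot_le
  rw [setOf_le_map_eq_eq_Iio hlt hPx fun z _ => bot_le] at hab
  have hμx : μK ⊥ x ≠ 0 := by rw [hEuler ⊥ x bot_le]; exact pow_ne_zero _ (by norm_num)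
  exact hPx (hx x (bot_covBy_of_Iio_eq_Icc μK hμK2 hμx hbotx hab) le_rfl).1

open scoped Classical in
/-- For a projection `P ∈ Or(K)` of a finite Eulerian poset `K`, with
`A := P⁻¹(⊥) ∩ atom(K)`, one has `P⁻¹(⊥) = K_A`, where
`K_A = {x : every atom below x lies in A}`. -/
theorem stmt_7 {K : Type*} [PartialOrder K] [Fintype K] [OrderBot K] [OrderTop K]
    (ρ : K → ℕ) (hρbot : ρ ⊥ = 0) (hρ : ∀ x y : K, x ⋖ y → ρ y = ρ x + 1)
    (μK : K → K → ℤ)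
    (hμK1 : ∀ x : K, μK x x = 1)
    (hμK2 : ∀ x y : K, x < y →
      μK x y = -∑ z ∈ Finset.univ.filter (fun z => x ≤ z ∧ z < y), μK x z)
    (hμK3 : ∀ x y : K, ¬ x ≤ y → μK x y = 0)
    (hEuler : ∀ x y : K, x ≤ y → μK x y = (-1) ^ (ρ y - ρ x))
    (P : K → K) (hreg : ∀ x, P x ≤ x) (hmono : Monotone P) (hidem : P ∘ P = P)
    (hproj : ∀ x ∈ Set.range P, ∀ y ∈ Set.range P, x ≤ y →
      ∃ a b : K, {z : K | x ≤ z ∧ z ≤ y ∧ P z = x} = Set.Icc a b)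
    (A : Set K) (hA : A = {a : K | P a = ⊥ ∧ ⊥ ⋖ a}) :
    {x : K | P x = ⊥} = {x : K | ∀ a : K, ⊥ ⋖ a → a ≤ x → a ∈ A} :=
  stmt_7_general ρ μK hμK2 hEuler P hreg hmono hidem hproj A hA
end

section
/- A matching M of a finite graded poset K is a special matching if and only if it satisfies the lifting property: for all u ≤ v with u ⋖ M(u) and M(v) ⋖ v, one has M(u) ≤ v and u ≤ M(v). -/
/-!
Both directions rest on one observation: if `a ⋖ b` then nothing lies strictly between
`a` and `b`, so a chain `a < M a ≤ M b < b` is impossible. For a special matching, given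
`u < v`, pick `u ⋖ z ≤ v`; either `z = M u`, or speciality gives `M u ≤ M z`, which by the
observation forces `z ⋖ M z`, and `M z ≤ v` follows by induction on the interval `[z, v]`.
Speciality is self-dual, and the other half of the lifting property is the same statement
in the dual order.
-/

open Function OrderDual

section

variable {K : Type*} [PartialOrder K]

def IsMatching (M : K → K) : Prop :=
  Involutive M ∧ ∀ x, M x ⋖ x ∨ x ⋖ M x

def IsSpecial (M : K → K) : Prop :=
  ∀ x y, x ⋖ y → x ≠ M y → M x ≤ M y

def HasLiftingProperty (M : K → K) : Prop :=
  ∀ u v, u ≤ v → u ⋖ M u → M v ⋖ v → M u ≤ v ∧ u ≤ M v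

namespace IsMatching

variable {M : K → K}

theorem dual (hM : IsMatching M) : IsMatching (toDual ∘ M ∘ ofDual) :=
  ⟨hM.1, fun x => by
    rw [← toDual_ofDual x, comp_apply, comp_apply, ofDual_toDual, toDual_covBy_toDual_iff,
      toDual_covBy_toDual_iff]
    exact (hM.2 (ofDual x)).symm⟩

theorem ne_map_comm (hM : IsMatching M) {x y : K} : x ≠ M y ↔ y ≠ M x := by
  constructor <;> rintro h rfl <;> exact h (hM.1 _).symm

end IsMatching

namespace IsSpecial

variable {M : K → K}

theorem dual (hM : IsMatching M) (hS : IsSpecial M) : IsSpecial (toDual ∘ M ∘ ofDual) :=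
  fun x y hxy hne =>
    hS (ofDual y) (ofDual x) (ofDual_covBy_ofDual_iff.2 hxy) (hM.ne_map_comm.1 hne)

theorem map_le_of_le [IsStronglyAtomic K] [WellFoundedGT K] (hM : IsMatching M)
    (hS : IsSpecial M) {u v : K} (huv : u ≤ v) (hu : u ⋖ M u) (hv : M v ⋖ v) : M u ≤ v := by
  induction u using WellFoundedGT.induction with
  | _ u ih =>
    obtain rfl | hlt := huv.eq_or_lt
    · exact absurd hu.lt hv.lt.not_gt
    obtain ⟨z, huz, hzv⟩ := exists_covBy_le_of_lt hlt
    by_cases hz : z = M u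
    · exact hz ▸ hzv
    have hMuz : M u ≤ M z := hS u z huz (hM.ne_map_comm.2 hz)
    rcases hM.2 z with hzM | hzM
    · exact absurd hzM.lt (huz.2 (hu.lt.trans_le hMuz))
    · exact hMuz.trans (ih z huz.lt hzv hzM)

theorem le_map_of_le [IsStronglyCoatomic K] [WellFoundedLT K] (hM : IsMatching M)
    (hS : IsSpecial M) {u v : K} (huv : u ≤ v) (hu : u ⋖ M u) (hv : M v ⋖ v) : u ≤ M v :=
  (hS.dual hM).map_le_of_le (K := Kᵒᵈ) hM.dual (toDual_le_toDual.2 huv)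
    (toDual_covBy_toDual_iff.2 hv) (toDual_covBy_toDual_iff.2 hu)

theorem hasLiftingProperty [WellFoundedLT K] [WellFoundedGT K] (hM : IsMatching M)
    (hS : IsSpecial M) : HasLiftingProperty M :=
  fun _ _ huv hu hv => ⟨hS.map_le_of_le hM huv hu hv, hS.le_map_of_le hM huv hu hv⟩

end IsSpecial

theorem HasLiftingProperty.isSpecial {M : K → K} (hM : IsMatching M)
    (hL : HasLiftingProperty M) : IsSpecial M := by
  intro x y hxy hne
  rcases hM.2 x with hx | hx <;> rcases hM.2 y with hy | hy
  · exact (hL (M x) y (hx.le.trans hxy.le) (by rwa [hM.1]) hy).2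
  · exact (hx.le.trans hxy.le).trans hy.le
  · have hMxy : M x = y :=
      (hxy.eq_or_eq hx.le (hL x y hxy.le hx hy).1).resolve_left hx.lt.ne'
    exact absurd (hMxy ▸ (hM.1 x).symm) hne
  · exact (hL x (M y) (hxy.le.trans hy.le) hx (by rwa [hM.1])).1

theorem isSpecial_iff_hasLiftingProperty [Finite K] {M : K → K} (hM : IsMatching M) :
    IsSpecial M ↔ HasLiftingProperty M :=
  ⟨IsSpecial.hasLiftingProperty hM, HasLiftingProperty.isSpecial hM⟩

end

theorem stmt_9_general {K : Type*} [PartialOrder K] [Fintype K]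
    (M : K → K) (hinv : ∀ x, M (M x) = x) (hmatch : ∀ x, M x ⋖ x ∨ x ⋖ M x) :
    (∀ x y : K, x ⋖ y → x ≠ M y → M x ≤ M y) ↔
    (∀ u v : K, u ≤ v → u ⋖ M u → M v ⋖ v → M u ≤ v ∧ u ≤ M v) :=
  isSpecial_iff_hasLiftingProperty ⟨hinv, hmatch⟩

/-- A matching `M` of a finite graded poset `K` is a special matching iff
it satisfies the lifting property: for all `u ≤ v` with `u ⋖ M u` and `M v ⋖ v`, one
has `M u ≤ v` and `u ≤ M v`. -/
theorem stmt_9 {K : Type*} [PartialOrder K] [Fintype K] [OrderBot K] [OrderTop K]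
    (ρ : K → ℕ) (hρbot : ρ ⊥ = 0) (hρ : ∀ x y : K, x ⋖ y → ρ y = ρ x + 1)
    (M : K → K) (hinv : ∀ x, M (M x) = x) (hmatch : ∀ x, M x ⋖ x ∨ x ⋖ M x) :
    (∀ x y : K, x ⋖ y → x ≠ M y → M x ≤ M y) ↔
    (∀ u v : K, u ≤ v → u ⋖ M u → M v ⋖ v → M u ≤ v ∧ u ≤ M v) :=
  stmt_9_general M hinv hmatch
end

section
/- Let M be a special matching of a finite graded poset K. Define P^M(x) = x if x ⋖ M(x), and P^M(x) = M(x) if M(x) ⋖ x. Then P^M is an idempotent, regressive, order-preserving endomorphism of K. -/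
/-!
`P^M` fixes the bottom element of every matched edge and sends the top one down to it, so it is
regressive and idempotent. Since a finite poset is generated by its covering relations, monotonicity
only has to be checked on a cover `x ⋖ y`; when `M y ⋖ y` this is exactly the special-matching
condition, and otherwise `P^M x ≤ x ≤ y = P^M y`.
-/

namespace SpecialMatching

variable {K : Type*} [PartialOrder K] {M PM : K → K}

theorem proj_le (hmatch : ∀ x, M x ⋖ x ∨ x ⋖ M x)
    (hPM : ∀ x : K, (x ⋖ M x → PM x = x) ∧ (M x ⋖ x → PM x = M x)) (x : K) : PM x ≤ x := by
  rcases hmatch x with h | h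
  · exact ((hPM x).2 h).trans_le h.le
  · exact ((hPM x).1 h).le

theorem proj_apply_of_apply_covBy (hinv : ∀ x, M (M x) = x)
    (hPM : ∀ x : K, (x ⋖ M x → PM x = x) ∧ (M x ⋖ x → PM x = M x)) {x : K} (h : M x ⋖ x) :
    PM (M x) = M x :=
  (hPM (M x)).1 (by rwa [hinv])

theorem proj_proj (hinv : ∀ x, M (M x) = x) (hmatch : ∀ x, M x ⋖ x ∨ x ⋖ M x)
    (hPM : ∀ x : K, (x ⋖ M x → PM x = x) ∧ (M x ⋖ x → PM x = M x)) (x : K) :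
    PM (PM x) = PM x := by
  rcases hmatch x with h | h
  · rw [(hPM x).2 h, proj_apply_of_apply_covBy hinv hPM h]
  · rw [(hPM x).1 h, (hPM x).1 h]

theorem proj_le_proj_of_covBy (hinv : ∀ x, M (M x) = x) (hmatch : ∀ x, M x ⋖ x ∨ x ⋖ M x)
    (hspecial : ∀ x y : K, x ⋖ y → x ≠ M y → M x ≤ M y)
    (hPM : ∀ x : K, (x ⋖ M x → PM x = x) ∧ (M x ⋖ x → PM x = M x)) {x y : K} (hxy : x ⋖ y) :
    PM x ≤ PM y := by
  rcases hmatch y with hy | hy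
  · rw [(hPM y).2 hy]
    by_cases hx : x = M y
    · rw [hx, proj_apply_of_apply_covBy hinv hPM hy]
    have hMxy : M x ≤ M y := hspecial x y hxy hx
    rcases hmatch x with hx' | hx'
    · rwa [(hPM x).2 hx']
    · rw [(hPM x).1 hx']
      exact hx'.le.trans hMxy
  · rw [(hPM y).1 hy]
    exact (proj_le hmatch hPM x).trans hxy.le

theorem proj_monotone [Finite K] (hinv : ∀ x, M (M x) = x) (hmatch : ∀ x, M x ⋖ x ∨ x ⋖ M x)
    (hspecial : ∀ x y : K, x ⋖ y → x ≠ M y → M x ≤ M y)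
    (hPM : ∀ x : K, (x ⋖ M x → PM x = x) ∧ (M x ⋖ x → PM x = M x)) : Monotone PM := by
  classical
  have := Fintype.ofFinite K
  have := Fintype.toLocallyFiniteOrder (α := K)
  exact (monotone_iff_forall_covBy PM).2 fun _ _ ↦
    proj_le_proj_of_covBy hinv hmatch hspecial hPM

end SpecialMatching

theorem stmt_10_general {K : Type*} [PartialOrder K] [Fintype K]
    (M : K → K) (hinv : ∀ x, M (M x) = x) (hmatch : ∀ x, M x ⋖ x ∨ x ⋖ M x)
    (hspecial : ∀ x y : K, x ⋖ y → x ≠ M y → M x ≤ M y)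
    (PM : K → K)
    (hPM : ∀ x : K, (x ⋖ M x → PM x = x) ∧ (M x ⋖ x → PM x = M x)) :
    PM ∘ PM = PM ∧ (∀ x, PM x ≤ x) ∧ Monotone PM :=
  ⟨funext (SpecialMatching.proj_proj hinv hmatch hPM), SpecialMatching.proj_le hmatch hPM,
    SpecialMatching.proj_monotone hinv hmatch hspecial hPM⟩

/-- For a special matching `M` of a finite graded poset `K`, the map
`P^M` (with `P^M x = x` if `x ⋖ M x` and `P^M x = M x` if `M x ⋖ x`) is an idempotent,
regressive, order-preserving endomorphism of `K`. -/
theorem stmt_10 {K : Type*} [PartialOrder K] [Fintype K] [OrderBot K] [OrderTop K]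
    (ρ : K → ℕ) (hρbot : ρ ⊥ = 0) (hρ : ∀ x y : K, x ⋖ y → ρ y = ρ x + 1)
    (M : K → K) (hinv : ∀ x, M (M x) = x) (hmatch : ∀ x, M x ⋖ x ∨ x ⋖ M x)
    (hspecial : ∀ x y : K, x ⋖ y → x ≠ M y → M x ≤ M y)
    (PM : K → K)
    (hPM : ∀ x : K, (x ⋖ M x → PM x = x) ∧ (M x ⋖ x → PM x = M x)) :
    PM ∘ PM = PM ∧ (∀ x, PM x ≤ x) ∧ Monotone PM :=
  stmt_10_general M hinv hmatch hspecial PM hPM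
end

section
/- Let K₁ and K₂ be finite graded posets. Then M is a special matching of K₁ × K₂ if and only if M = N × id_{K₂} for some special matching N of K₁, or M = id_{K₁} × N for some special matching N of K₂. -/
/-
A special matching of `K₁ × K₂` moves `(⊥, ⊥)` along one of the two factors, say along `K₁`.
The defining condition propagates matched pairs across covering squares: a horizontal pair
`(u, c) — (v, c)` lifts to `(u, y) — (v, y)` for every `y ≥ c`, and a vertical pair
`(x, c) — (x, b)` descends to `(x', c) — (x', b)` for every `x' ≤ x`. By the second, no point of
the bottom row `K₁ × {⊥}` is matched vertically, since that pair would descend to `(⊥, ⊥)`; so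
`M` restricts to a special matching `N` of the bottom row, and the first gives `M = N × id`.
-/

/-- A special matching of a poset: an involution `M` such that each `x` is covered by
or covers `M x`, and `x ⋖ y`, `x ≠ M y` imply `M x ≤ M y`. -/
def IsSpecialMatching {K : Type*} [PartialOrder K] (M : K → K) : Prop :=
  (∀ x, M (M x) = x) ∧ (∀ x, M x ⋖ x ∨ x ⋖ M x) ∧
    (∀ x y : K, x ⋖ y → x ≠ M y → M x ≤ M y)

namespace IsSpecialMatching

variable {K : Type*} [PartialOrder K] {M : K → K}

theorem apply_apply (hM : IsSpecialMatching M) (x : K) : M (M x) = x :=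
  hM.1 x

theorem covBy_or_covBy (hM : IsSpecialMatching M) (x : K) : M x ⋖ x ∨ x ⋖ M x :=
  hM.2.1 x

theorem apply_le_apply (hM : IsSpecialMatching M) {x y : K} (hxy : x ⋖ y) (hne : x ≠ M y) :
    M x ≤ M y :=
  hM.2.2 x y hxy hne

theorem bot_covBy_apply [OrderBot K] (hM : IsSpecialMatching M) : ⊥ ⋖ M ⊥ :=
  (hM.covBy_or_covBy ⊥).resolve_left fun h => not_lt_bot h.lt

theorem apply_eq_of_isLUB (hM : IsSpecialMatching M) {p q r : K} (hpq : p ⋖ q)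
    (hp : p ⋖ M p) (hne : M p ≠ q) (hr : IsLUB {q, M p} r) : M q = r := by
  have hle : M p ≤ M q := hM.apply_le_apply hpq fun h => hne (by rw [h, hM.apply_apply])
  have hnle : ¬M p ≤ q := fun h => hpq.2 hp.lt (h.lt_of_ne hne)
  have hq : q ⋖ M q := (hM.covBy_or_covBy q).resolve_left fun h => hnle (hle.trans h.le)
  have hqr : q < r := lt_of_le_not_ge (hr.1 (by simp)) fun h => hnle ((hr.1 (by simp)).trans h)
  have hrM : r ≤ M q := hr.2 (by rintro _ (rfl | rfl); exacts [hq.le, hle])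
  exact (hrM.lt_or_eq.resolve_left (hq.2 hqr)).symm

theorem apply_eq_of_isGLB (hM : IsSpecialMatching M) {p q r : K} (hqp : q ⋖ p)
    (hp : M p ⋖ p) (hne : M p ≠ q) (hr : IsGLB {q, M p} r) : M q = r := by
  have hle : M q ≤ M p := hM.apply_le_apply hqp hne.symm
  have hnle : ¬q ≤ M p := fun h => hqp.2 (h.lt_of_ne hne.symm) hp.lt
  have hq : M q ⋖ q := (hM.covBy_or_covBy q).resolve_right fun h => hnle (h.le.trans hle)
  have hrq : r < q := lt_of_le_not_ge (hr.1 (by simp)) fun h => hnle (h.trans (hr.1 (by simp)))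
  have hMr : M q ≤ r := hr.2 (by rintro _ (rfl | rfl); exacts [hq.le, hle])
  exact hMr.lt_or_eq.resolve_left fun h => hq.2 h hrq

theorem conj_orderIso {L : Type*} [PartialOrder L] (hM : IsSpecialMatching M) (e : K ≃o L) :
    IsSpecialMatching (e ∘ M ∘ e.symm) := by
  refine ⟨fun x => by simp [hM.apply_apply], fun x => ?_, fun x y hxy hne => ?_⟩
  · simpa using (hM.covBy_or_covBy (e.symm x)).imp (apply_covBy_apply_iff e).2
      (apply_covBy_apply_iff e).2
  · refine e.le_iff_le.2 (hM.apply_le_apply ((apply_covBy_apply_iff e.symm).2 hxy) fun h => ?_)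
    exact hne (by simp [← h])

theorem conj_orderIso_iff {L : Type*} [PartialOrder L] (e : K ≃o L) :
    IsSpecialMatching (e ∘ M ∘ e.symm) ↔ IsSpecialMatching M :=
  ⟨fun h => by simpa [Function.comp_def] using h.conj_orderIso e.symm,
    fun hM => hM.conj_orderIso e⟩

end IsSpecialMatching

section Prod

variable {K₁ K₂ : Type*} [PartialOrder K₁] [PartialOrder K₂]

theorem Prod.isLUB_pair_mk {u v : K₁} {c y : K₂} (huv : u ≤ v) (hcy : c ≤ y) :
    IsLUB {(u, y), (v, c)} (v, y) :=
  ⟨by rintro _ (rfl | rfl); exacts [⟨huv, le_rfl⟩, ⟨le_rfl, hcy⟩],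
    fun z hz => ⟨(hz (Set.mem_insert_of_mem _ rfl)).1, (hz (Set.mem_insert _ _)).2⟩⟩

theorem Prod.isGLB_pair_mk {x' x : K₁} {c b : K₂} (hx : x' ≤ x) (hcb : c ≤ b) :
    IsGLB {(x', b), (x, c)} (x', c) :=
  ⟨by rintro _ (rfl | rfl); exacts [⟨le_rfl, hcb⟩, ⟨hx, le_rfl⟩],
    fun z hz => ⟨(hz (Set.mem_insert _ _)).1, (hz (Set.mem_insert_of_mem _ rfl)).2⟩⟩

theorem isSpecialMatching_prod_left_iff [Nonempty K₂] {N : K₁ → K₁} :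
    IsSpecialMatching (fun p : K₁ × K₂ => (N p.1, p.2)) ↔ IsSpecialMatching N := by
  constructor
  · intro h
    let y : K₂ := Classical.arbitrary K₂
    refine ⟨fun x => congrArg Prod.fst (h.apply_apply (x, y)), fun x => ?_, fun x x' hx hne => ?_⟩
    · exact (h.covBy_or_covBy (x, y)).imp Prod.mk_covBy_mk_iff_left.1
        Prod.mk_covBy_mk_iff_left.1
    · exact (h.apply_le_apply (Prod.mk_covBy_mk_iff_left.2 hx : (x, y) ⋖ (x', y))
        (by simpa using hne)).1
  · intro hN
    refine ⟨fun p => by simp [hN.apply_apply], fun p => ?_, fun p q hpq hne => ?_⟩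
    · exact (hN.covBy_or_covBy p.1).imp Prod.mk_covBy_mk_iff_left.2 Prod.mk_covBy_mk_iff_left.2
    · rcases Prod.covBy_iff.1 hpq with ⟨h1, h2⟩ | ⟨h2, h1⟩
      · exact ⟨hN.apply_le_apply h1 fun h => hne (Prod.ext h h2), h2.le⟩
      · exact ⟨(congrArg N h1).le, h2.le⟩

theorem isSpecialMatching_prod_right_iff [Nonempty K₁] {N : K₂ → K₂} :
    IsSpecialMatching (fun p : K₁ × K₂ => (p.1, N p.2)) ↔ IsSpecialMatching N :=
  (IsSpecialMatching.conj_orderIso_iff OrderIso.prodComm).symm.trans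
    isSpecialMatching_prod_left_iff

namespace IsSpecialMatching

variable {M : K₁ × K₂ → K₁ × K₂}

theorem apply_mk_eq_of_le_fst [WellFoundedLT K₁] [IsStronglyCoatomic K₁]
    (hM : IsSpecialMatching M) {c b : K₂} (hcb : c ⋖ b) (x : K₁) (h : M (x, c) = (x, b)) :
    ∀ x' ≤ x, M (x', c) = (x', b) := by
  induction x using WellFoundedLT.induction with
  | _ x IH =>
  intro x' hx'
  rcases hx'.eq_or_lt with rfl | hlt
  · exact h
  obtain ⟨z, hx'z, hzx⟩ := exists_le_covBy_of_lt hlt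
  have hxb : M (x, b) = (x, c) := by rw [← h, hM.apply_apply]
  have hzb : M (z, b) = (z, c) :=
    hM.apply_eq_of_isGLB (Prod.mk_covBy_mk_iff_left.2 hzx)
      (by rw [hxb]; exact Prod.mk_covBy_mk_iff_right.2 hcb) (by simp [hxb, hzx.ne'])
      (by rw [hxb]; exact Prod.isGLB_pair_mk hzx.le hcb.le)
  exact IH z hzx.lt (by rw [← hzb, hM.apply_apply]) x' hx'z

theorem apply_mk_eq_of_snd_le [WellFoundedLT K₂] [IsStronglyCoatomic K₂]
    (hM : IsSpecialMatching M) {u v : K₁} {c : K₂} (huv : u ⋖ v) (h : M (u, c) = (v, c)) :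
    ∀ y, c ≤ y → M (u, y) = (v, y) := by
  intro y
  induction y using WellFoundedLT.induction with
  | _ y IH =>
  intro hcy
  rcases hcy.eq_or_lt with rfl | hlt
  · exact h
  obtain ⟨y', hcy', hy'y⟩ := exists_le_covBy_of_lt hlt
  have hy' := IH y' hy'y.lt hcy'
  exact hM.apply_eq_of_isLUB (Prod.mk_covBy_mk_iff_right.2 hy'y)
    (by rw [hy']; exact Prod.mk_covBy_mk_iff_left.2 huv) (by simp [hy', huv.ne'])
    (by rw [hy']; exact Prod.isLUB_pair_mk huv.le hy'y.le)

variable [OrderBot K₁] [OrderBot K₂]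

theorem snd_apply_mk_bot [WellFoundedLT K₁] [IsStronglyCoatomic K₁] (hM : IsSpecialMatching M)
    (hbot : (M ⊥).2 = ⊥) (x : K₁) : (M (x, ⊥)).2 = ⊥ := by
  rcases hM.covBy_or_covBy (x, ⊥) with h | h <;> rcases Prod.covBy_iff.1 h with ⟨_, h2⟩ | ⟨h2, h1⟩
  · exact h2
  · exact absurd h2.lt not_lt_bot
  · exact h2.symm
  · have hbot' := hM.apply_mk_eq_of_le_fst h2 x (Prod.ext h1.symm rfl) ⊥ bot_le
    exact (congrArg Prod.snd hbot').symm.trans hbot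

theorem exists_eq_prod_left [WellFoundedLT K₁] [IsStronglyCoatomic K₁] [WellFoundedLT K₂]
    [IsStronglyCoatomic K₂] (hM : IsSpecialMatching M) (hbot : (M ⊥).2 = ⊥) :
    ∃ N : K₁ → K₁, IsSpecialMatching N ∧ M = fun p => (N p.1, p.2) := by
  set N : K₁ → K₁ := fun x => (M (x, ⊥)).1
  have hN : ∀ x, M (x, ⊥) = (N x, ⊥) := fun x => Prod.ext rfl (hM.snd_apply_mk_bot hbot x)
  have hMN : M = fun p => (N p.1, p.2) := by
    funext ⟨x, y⟩
    show M (x, y) = (N x, y)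
    rcases hM.covBy_or_covBy (x, ⊥) with h | h <;> rw [hN] at h
    · have hNx : M (N x, ⊥) = (x, ⊥) := by rw [← hN, hM.apply_apply]
      have := hM.apply_mk_eq_of_snd_le (Prod.mk_covBy_mk_iff_left.1 h) hNx y bot_le
      rw [← this, hM.apply_apply]
    · exact hM.apply_mk_eq_of_snd_le (Prod.mk_covBy_mk_iff_left.1 h) (hN x) y bot_le
  exact ⟨N, isSpecialMatching_prod_left_iff.1 (hMN ▸ hM), hMN⟩

theorem exists_eq_prod_right [WellFoundedLT K₁] [IsStronglyCoatomic K₁] [WellFoundedLT K₂]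
    [IsStronglyCoatomic K₂] (hM : IsSpecialMatching M) (hbot : (M ⊥).1 = ⊥) :
    ∃ N : K₂ → K₂, IsSpecialMatching N ∧ M = fun p => (p.1, N p.2) := by
  obtain ⟨N, hN, hMN⟩ := (hM.conj_orderIso OrderIso.prodComm).exists_eq_prod_left (by simpa)
  refine ⟨N, hN, funext fun p => ?_⟩
  simpa using congrArg Prod.swap (congrFun hMN p.swap)

end IsSpecialMatching

end Prod

theorem stmt_11_general {K₁ K₂ : Type*} [PartialOrder K₁] [PartialOrder K₂]
    [Fintype K₁] [Fintype K₂] [OrderBot K₁] [OrderBot K₂]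
    (M : K₁ × K₂ → K₁ × K₂) :
    IsSpecialMatching M ↔
      ((∃ N : K₁ → K₁, IsSpecialMatching N ∧ M = fun p => (N p.1, p.2)) ∨
       (∃ N : K₂ → K₂, IsSpecialMatching N ∧ M = fun p => (p.1, N p.2))) := by
  constructor
  · intro hM
    rcases Prod.covBy_iff.1 hM.bot_covBy_apply with ⟨_, h⟩ | ⟨_, h⟩
    · exact Or.inl (hM.exists_eq_prod_left h.symm)
    · exact Or.inr (hM.exists_eq_prod_right h.symm)
  · rintro (⟨N, hN, rfl⟩ | ⟨N, hN, rfl⟩)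
    · exact isSpecialMatching_prod_left_iff.2 hN
    · exact isSpecialMatching_prod_right_iff.2 hN

/-- `M` is a special matching of the product `K₁ × K₂` of finite graded
posets iff `M = N × id` for a special matching `N` of `K₁`, or `M = id × N` for a
special matching `N` of `K₂`. -/
theorem stmt_11 {K₁ K₂ : Type*} [PartialOrder K₁] [PartialOrder K₂]
    [Fintype K₁] [Fintype K₂] [OrderBot K₁] [OrderTop K₁] [OrderBot K₂] [OrderTop K₂]
    (ρ₁ : K₁ → ℕ) (hρ₁bot : ρ₁ ⊥ = 0) (hρ₁ : ∀ x y : K₁, x ⋖ y → ρ₁ y = ρ₁ x + 1)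
    (ρ₂ : K₂ → ℕ) (hρ₂bot : ρ₂ ⊥ = 0) (hρ₂ : ∀ x y : K₂, x ⋖ y → ρ₂ y = ρ₂ x + 1)
    (M : K₁ × K₂ → K₁ × K₂) :
    IsSpecialMatching M ↔
      ((∃ N : K₁ → K₁, IsSpecialMatching N ∧ M = fun p => (N p.1, p.2)) ∨
       (∃ N : K₂ → K₂, IsSpecialMatching N ∧ M = fun p => (p.1, N p.2))) :=
  stmt_11_general M
end

section
/- Let n > 1 with prime factorization n = p₁^{k₁} ⋯ p_h^{k_h}, and let P_n be the poset of divisors of n ordered by divisibility. For each i with k_i odd, the map M_i(z) = z·p_i if v_{p_i}(z) is even and M_i(z) = z/p_i if v_{p_i}(z) is odd, is a special matching of P_n; moreover every special matching of P_n is of this form. -/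
/-- The poset of divisors of `n`, ordered by divisibility. -/
def DivisorPoset (n : ℕ) : Type := {d : ℕ // d ∣ n}

instance (n : ℕ) : PartialOrder (DivisorPoset n) where
  le a b := a.1 ∣ b.1
  le_refl a := dvd_refl _
  le_trans a b c hab hbc := dvd_trans hab hbc
  le_antisymm a b hab hba := Subtype.ext (Nat.dvd_antisymm hab hba)

/-!
For a prime `p`, the map `M_p` toggles the `p`-adic valuation between `2j` and `2j + 1` and
commutes with multiplication by every other prime; this gives the lifting property, and `M_p`
stays inside `P_n` exactly when `v_p(n)` is odd.

Conversely, a special matching `M` sends `1` to a prime `p`, and `M z = M_p z` by induction on `z`.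
If `v_p(z)` is odd, `z / p` is already matched with `z`. If `v_p(z)` is even, `M z` cannot lie
below `z`, since it would then be matched by `M_p` with `z`; and if `M z = z q` with a prime
`q ≠ p`, the lifting property applied to `z / r ⋖ z` (for a prime `r ≠ p` dividing `z`) or to
`(z / p) q ⋖ z q` contradicts the induction hypothesis.
-/

theorem Nat.Prime.eq_of_dvd_mul_of_ne {p q r : ℕ} (hp : p.Prime) (hq : q.Prime) (hr : r.Prime)
    (h : p ∣ q * r) (hpq : p ≠ q) : p = r := by
  rcases hp.dvd_mul.1 h with h | h
  · exact absurd ((Nat.prime_dvd_prime_iff_eq hp hq).1 h) hpq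
  · exact (Nat.prime_dvd_prime_iff_eq hp hr).1 h

theorem Nat.lt_mul_prime {a q : ℕ} (ha : a ≠ 0) (hq : q.Prime) : a < a * q :=
  lt_mul_of_one_lt_right (Nat.pos_of_ne_zero ha) hq.one_lt

/-- The map `M_p` of the statement, on all of `ℕ`. -/
def primeFlip (p z : ℕ) : ℕ := if Even (z.factorization p) then z * p else z / p

section primeFlip

variable {p q z m : ℕ}

theorem eq_primeFlip_iff : m = primeFlip p z ↔
    (Even (z.factorization p) → m = z * p) ∧ (Odd (z.factorization p) → m = z / p) := by
  unfold primeFlip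
  split_ifs with h
  · simp [h]
  · simp [Nat.not_even_iff_odd.1 h, h]

theorem primeFlip_of_even (h : Even (z.factorization p)) : primeFlip p z = z * p := if_pos h

theorem primeFlip_of_odd (h : Odd (z.factorization p)) : primeFlip p z = z / p :=
  if_neg (Nat.not_even_iff_odd.2 h)

theorem factorization_mul_prime_self (hp : p.Prime) (hz : z ≠ 0) :
    (z * p).factorization p = z.factorization p + 1 := by
  rw [Nat.factorization_mul hz hp.ne_zero, Finsupp.add_apply, hp.factorization_self]

theorem factorization_mul_prime_of_ne (hq : q.Prime) (hqp : q ≠ p) (hz : z ≠ 0) :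
    (z * q).factorization p = z.factorization p := by
  rw [Nat.factorization_mul hz hq.ne_zero, Finsupp.add_apply, hq.factorization,
    Finsupp.single_eq_of_ne hqp.symm, add_zero]

theorem dvd_of_odd_factorization (hp : p.Prime) (hz : z ≠ 0) (h : Odd (z.factorization p)) :
    p ∣ z :=
  (hp.dvd_iff_one_le_factorization hz).2 h.pos

theorem primeFlip_mul_self_of_even (hp : p.Prime) (hz : z ≠ 0) (h : Even (z.factorization p)) :
    primeFlip p (z * p) = z := by
  rw [primeFlip_of_odd (by rw [factorization_mul_prime_self hp hz]; exact h.add_one),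
    Nat.mul_div_cancel _ hp.pos]

theorem primeFlip_primeFlip (hp : p.Prime) (hz : z ≠ 0) : primeFlip p (primeFlip p z) = z := by
  rcases Nat.even_or_odd (z.factorization p) with h | h
  · rw [primeFlip_of_even h, primeFlip_mul_self_of_even hp hz h]
  · obtain ⟨y, rfl⟩ := dvd_of_odd_factorization hp hz h
    rw [mul_comm] at hz h ⊢
    have hy : y ≠ 0 := left_ne_zero_of_mul hz
    rw [factorization_mul_prime_self hp hy, Nat.odd_add_one, Nat.not_odd_iff_even] at h
    rw [primeFlip_mul_self_of_even hp hy h, primeFlip_of_even h]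

theorem primeFlip_eq_mul_or_mul_eq (hp : p.Prime) (hz : z ≠ 0) :
    primeFlip p z = z * p ∨ primeFlip p z * p = z := by
  rcases Nat.even_or_odd (z.factorization p) with h | h
  · exact .inl (primeFlip_of_even h)
  · exact .inr (by rw [primeFlip_of_odd h, Nat.div_mul_cancel (dvd_of_odd_factorization hp hz h)])

theorem primeFlip_mul_of_ne (hp : p.Prime) (hq : q.Prime) (hqp : q ≠ p) (hz : z ≠ 0) :
    primeFlip p (z * q) = primeFlip p z * q := by
  have hv := factorization_mul_prime_of_ne hq hqp hz
  rcases Nat.even_or_odd (z.factorization p) with h | h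
  · rw [primeFlip_of_even h, primeFlip_of_even (hv ▸ h), mul_right_comm]
  · rw [primeFlip_of_odd h, primeFlip_of_odd (hv ▸ h),
      Nat.div_mul_right_comm (dvd_of_odd_factorization hp hz h)]

theorem primeFlip_ne_mul_of_ne (hp : p.Prime) (hq : q.Prime) (hqp : q ≠ p) (hz : z ≠ 0) :
    primeFlip p z ≠ z * q := by
  intro h
  have h' : z = z * q * q :=
    calc z = primeFlip p (primeFlip p z) := (primeFlip_primeFlip hp hz).symm
      _ = z * q * q := by rw [h, primeFlip_mul_of_ne hp hq hqp hz, h]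
  exact h'.not_lt <|
    (Nat.lt_mul_prime hz hq).trans (Nat.lt_mul_prime (mul_ne_zero hz hq.ne_zero) hq)

end primeFlip

namespace DivisorPoset

variable {n : ℕ}

theorem le_iff {a b : DivisorPoset n} : a ≤ b ↔ a.1 ∣ b.1 := Iff.rfl

theorem val_ne_zero (hn : n ≠ 0) (a : DivisorPoset n) : a.1 ≠ 0 :=
  ne_zero_of_dvd_ne_zero hn a.2

theorem covBy_iff (hn : n ≠ 0) {a b : DivisorPoset n} :
    a ⋖ b ↔ ∃ q, q.Prime ∧ b.1 = a.1 * q := by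
  have ha := val_ne_zero hn a
  constructor
  · intro h
    obtain ⟨m, hm⟩ : a.1 ∣ b.1 := h.le
    have hm1 : m ≠ 1 := by
      rintro rfl
      exact h.ne (Subtype.ext (by rw [hm, mul_one]))
    obtain ⟨q, hq, hqm⟩ := Nat.exists_prime_and_dvd hm1
    have hcb : a.1 * q ∣ b.1 := hm ▸ mul_dvd_mul_left a.1 hqm
    let c : DivisorPoset n := ⟨a.1 * q, hcb.trans b.2⟩
    rcases h.eq_or_eq (c := c) (dvd_mul_right a.1 q) hcb with hca | hcb
    · exact absurd (congrArg Subtype.val hca) (Nat.lt_mul_prime ha hq).ne'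
    · exact ⟨q, hq, (congrArg Subtype.val hcb).symm⟩
  · rintro ⟨q, hq, hb⟩
    refine covBy_iff_lt_and_eq_or_eq.2
      ⟨lt_of_le_of_ne ⟨q, hb⟩ fun hab => ?_, fun c ⟨m, hm⟩ hcb => ?_⟩
    · exact (Nat.lt_mul_prime ha hq).ne (by rw [← hb, hab])
    · rw [le_iff, hm, hb, Nat.mul_dvd_mul_iff_left (Nat.pos_of_ne_zero ha)] at hcb
      rcases hq.eq_one_or_self_of_dvd m hcb with rfl | rfl
      · exact .inl (Subtype.ext (by rw [hm, mul_one]))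
      · exact .inr (Subtype.ext (hm.trans hb.symm))

theorem val_lt_of_covBy (hn : n ≠ 0) {a b : DivisorPoset n} (h : a ⋖ b) : a.1 < b.1 := by
  obtain ⟨q, hq, hb⟩ := (covBy_iff hn).1 h
  exact hb ▸ Nat.lt_mul_prime (val_ne_zero hn a) hq

end DivisorPoset

open DivisorPoset

section

variable {n p : ℕ} {M : DivisorPoset n → DivisorPoset n}

theorem isSpecialMatching_of_primeFlip (hn : n ≠ 0) (hp : p.Prime)
    (hM : ∀ z, (M z).1 = primeFlip p z.1) : IsSpecialMatching M := by
  have hz := val_ne_zero hn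
  refine ⟨fun z => Subtype.ext ?_, fun z => ?_, fun x y hxy hne => ?_⟩
  · rw [hM, hM, primeFlip_primeFlip hp (hz z)]
  · rcases primeFlip_eq_mul_or_mul_eq hp (hz z) with h | h
    · exact .inr ((covBy_iff hn).2 ⟨p, hp, (hM z).trans h⟩)
    · exact .inl ((covBy_iff hn).2 ⟨p, hp, by rw [hM, h]⟩)
  · obtain ⟨q, hq, hy⟩ := (covBy_iff hn).1 hxy
    rw [le_iff, hM, hM, hy]
    by_cases hqp : q = p
    · subst hqp
      rcases Nat.even_or_odd (x.1.factorization q) with h | h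
      · refine absurd (Subtype.ext ?_) hne
        rw [hM, hy, primeFlip_mul_self_of_even hq (hz x) h]
      · rw [primeFlip_of_odd h, primeFlip_of_even (by
          rw [factorization_mul_prime_self hq (hz x)]; exact h.add_one)]
        exact (Nat.div_dvd_of_dvd (dvd_of_odd_factorization hq (hz x) h)).trans
          ((dvd_mul_right x.1 q).mul_right q)
    · rw [primeFlip_mul_of_ne hp hq hqp (hz x)]
      exact dvd_mul_right _ _

theorem odd_factorization_of_primeFlip (hn : n ≠ 0) (hp : p.Prime)
    (hM : ∀ z, (M z).1 = primeFlip p z.1) : Odd (n.factorization p) := by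
  by_contra h
  rw [Nat.not_odd_iff_even] at h
  let z : DivisorPoset n := ⟨p ^ n.factorization p, Nat.ordProj_dvd n p⟩
  have hz : Even (z.1.factorization p) := by simpa [z, hp.factorization_pow] using h
  apply Nat.pow_succ_factorization_not_dvd hn hp
  rw [pow_succ, ← primeFlip_of_even hz, ← hM z]
  exact (M z).2

namespace IsSpecialMatching

variable (hn : n ≠ 0) (hM : IsSpecialMatching M)
include hn hM

theorem prime_apply_one : (M ⟨1, one_dvd n⟩).1.Prime := by
  rcases hM.2.1 ⟨1, one_dvd n⟩ with h | h
  · exact absurd (Nat.lt_one_iff.1 (val_lt_of_covBy hn h)) (val_ne_zero hn _)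
  · obtain ⟨q, hq, h⟩ := (covBy_iff hn).1 h
    rwa [h, one_mul]

theorem not_apply_covBy_of_even (hp : p.Prime) {z : DivisorPoset n}
    (h : Even (z.1.factorization p))
    (ih : ∀ y : DivisorPoset n, y.1 < z.1 → (M y).1 = primeFlip p y.1) : ¬ M z ⋖ z := by
  intro hcov
  have hlt := val_lt_of_covBy hn hcov
  have hflip : primeFlip p (M z).1 = z.1 := by rw [← ih _ hlt, hM.1]
  have hMz : z.1 * p = (M z).1 := by
    rw [← primeFlip_of_even h, ← hflip, primeFlip_primeFlip hp (val_ne_zero hn _)]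
  have := Nat.lt_mul_prime (val_ne_zero hn z) hp
  omega

theorem prime_eq_of_apply_eq_mul_of_dvd_of_ne (hp : p.Prime) {z : DivisorPoset n}
    (h : Even (z.1.factorization p))
    (ih : ∀ y : DivisorPoset n, y.1 < z.1 → (M y).1 = primeFlip p y.1)
    {q r : ℕ} (hq : q.Prime) (hMz : (M z).1 = z.1 * q) (hr : r.Prime) (hrz : r ∣ z.1)
    (hrp : r ≠ p) : q = p := by
  let x : DivisorPoset n := ⟨z.1 / r, (Nat.div_dvd_of_dvd hrz).trans z.2⟩
  have hzx : z.1 = x.1 * r := (Nat.div_mul_cancel hrz).symm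
  have hxz : x ⋖ z := (covBy_iff hn).2 ⟨r, hr, hzx⟩
  have hxMz : x ≠ M z := fun he => by
    have := val_lt_of_covBy hn hxz
    have := Nat.lt_mul_prime (val_ne_zero hn z) hq
    have := congrArg Subtype.val he
    omega
  have hle : (M x).1 ∣ (M z).1 := hM.2.2 x z hxz hxMz
  have hflip : primeFlip p x.1 * r = z.1 * p := by
    rw [← primeFlip_mul_of_ne hp hr hrp (val_ne_zero hn x), ← hzx, primeFlip_of_even h]
  rw [ih x (val_lt_of_covBy hn hxz), hMz] at hle
  have hdvd : z.1 * p ∣ z.1 * (r * q) := by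
    rw [← hflip, mul_comm r q, ← mul_assoc]
    exact mul_dvd_mul_right hle r
  rw [Nat.mul_dvd_mul_iff_left (Nat.pos_of_ne_zero (val_ne_zero hn z))] at hdvd
  exact (hp.eq_of_dvd_mul_of_ne hr hq hdvd (Ne.symm hrp)).symm

theorem prime_eq_of_apply_eq_mul_of_dvd (hp : p.Prime) {z : DivisorPoset n}
    (ih : ∀ y : DivisorPoset n, y.1 < z.1 → (M y).1 = primeFlip p y.1)
    {q : ℕ} (hq : q.Prime) (hMz : (M z).1 = z.1 * q) (hpz : p ∣ z.1) : q = p := by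
  by_contra hqp
  let u : DivisorPoset n := ⟨z.1 / p, (Nat.div_dvd_of_dvd hpz).trans z.2⟩
  have hzu : z.1 = u.1 * p := (Nat.div_mul_cancel hpz).symm
  have hu := Nat.pos_of_ne_zero (val_ne_zero hn u)
  let x : DivisorPoset n :=
    ⟨u.1 * q, (hMz ▸ hzu ▸ mul_dvd_mul_right (dvd_mul_right _ _) q).trans (M z).2⟩
  have hxMz : x ⋖ M z := (covBy_iff hn).2 ⟨p, hp, by rw [hMz, hzu, mul_right_comm]⟩
  have hxz : x ≠ M (M z) := by
    rw [hM.1]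
    intro he
    exact hqp (Nat.eq_of_mul_eq_mul_left hu ((congrArg Subtype.val he).trans hzu))
  have hle : M x ≤ z := hM.1 z ▸ hM.2.2 x (M z) hxMz hxz
  -- `q ∣ x` but `q ∤ z = u p` and `M x ≤ z`, which forces `M x = x / q = u`
  have hMx : M x = u := by
    rcases hM.2.1 x with hdown | hup
    · obtain ⟨s, hs, hxs⟩ := (covBy_iff hn).1 hdown
      have hdvd : u.1 * q ∣ u.1 * (p * s) := by
        rw [← mul_assoc, ← hzu, show u.1 * q = x.1 from rfl, hxs]
        exact mul_dvd_mul_right hle s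
      rw [Nat.mul_dvd_mul_iff_left hu] at hdvd
      have hsq := (hq.eq_of_dvd_mul_of_ne hp hs hdvd hqp).symm
      subst hsq
      exact Subtype.ext (Nat.eq_of_mul_eq_mul_right hq.pos hxs.symm)
    · have hdvd : u.1 * q ∣ u.1 * p := hzu ▸ (hup.le.trans hle : x.1 ∣ z.1)
      rw [Nat.mul_dvd_mul_iff_left hu] at hdvd
      exact absurd ((Nat.prime_dvd_prime_iff_eq hq hp).1 hdvd) hqp
  have hMu : M u = x := by rw [← hMx, hM.1]
  have hflip := ih u (hzu ▸ Nat.lt_mul_prime (val_ne_zero hn u) hp)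
  rw [hMu] at hflip
  exact primeFlip_ne_mul_of_ne hp hq hqp (val_ne_zero hn u) hflip.symm

theorem apply_eq_primeFlip_of_odd (hp : p.Prime) {z : DivisorPoset n}
    (h : Odd (z.1.factorization p))
    (ih : ∀ y : DivisorPoset n, y.1 < z.1 → (M y).1 = primeFlip p y.1) :
    (M z).1 = primeFlip p z.1 := by
  have hz := val_ne_zero hn z
  have hpz := dvd_of_odd_factorization hp hz h
  let x : DivisorPoset n := ⟨z.1 / p, (Nat.div_dvd_of_dvd hpz).trans z.2⟩
  have hx : primeFlip p z.1 = x.1 := primeFlip_of_odd h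
  have hMx : M x = z := Subtype.ext <| by
    rw [ih x (Nat.div_lt_self (Nat.pos_of_ne_zero hz) hp.one_lt), ← hx,
      primeFlip_primeFlip hp hz]
  rw [hx, ← hMx, hM.1]

theorem apply_eq_mul_of_even (hp : p.Prime) (h1 : (M ⟨1, one_dvd n⟩).1 = p)
    {z : DivisorPoset n} (h : Even (z.1.factorization p))
    (ih : ∀ y : DivisorPoset n, y.1 < z.1 → (M y).1 = primeFlip p y.1) :
    (M z).1 = z.1 * p := by
  by_cases hz1 : z.1 = 1
  · obtain rfl : z = ⟨1, one_dvd n⟩ := Subtype.ext hz1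
    rw [h1, one_mul]
  obtain ⟨q, hq, hMz⟩ := (covBy_iff hn).1 <|
    (hM.2.1 z).resolve_left (hM.not_apply_covBy_of_even hn hp h ih)
  obtain ⟨r, hr, hrz⟩ := Nat.exists_prime_and_dvd hz1
  by_cases hrp : r = p
  · rw [hMz, hM.prime_eq_of_apply_eq_mul_of_dvd hn hp ih hq hMz (hrp ▸ hrz)]
  · rw [hMz, hM.prime_eq_of_apply_eq_mul_of_dvd_of_ne hn hp h ih hq hMz hr hrz hrp]

theorem apply_eq_primeFlip (hp : p.Prime) (h1 : (M ⟨1, one_dvd n⟩).1 = p) (z : DivisorPoset n) :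
    (M z).1 = primeFlip p z.1 := by
  induction z using (measure fun z : DivisorPoset n => z.1).wf.induction with
  | _ z ih =>
    rcases Nat.even_or_odd (z.1.factorization p) with h | h
    · rw [primeFlip_of_even h, hM.apply_eq_mul_of_even hn hp h1 h ih]
    · exact hM.apply_eq_primeFlip_of_odd hn hp h ih

end IsSpecialMatching

end

/-- For `n > 1`, a map `M` on the divisor poset `P_n` is a special
matching iff there is a prime `p ∣ n` with odd multiplicity in `n` such that `M`
multiplies by `p` divisors with even `p`-adic valuation, and divides by `p` divisors
with odd `p`-adic valuation. -/
theorem stmt_12 (n : ℕ) (hn : 1 < n) (M : DivisorPoset n → DivisorPoset n) :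
    IsSpecialMatching M ↔
      ∃ p : ℕ, p.Prime ∧ p ∣ n ∧ Odd (n.factorization p) ∧
        ∀ z : DivisorPoset n,
          (Even (z.1.factorization p) → (M z).1 = z.1 * p) ∧
          (Odd (z.1.factorization p) → (M z).1 = z.1 / p) := by
  have hn0 : n ≠ 0 := by omega
  simp only [← eq_primeFlip_iff]
  constructor
  · intro hM
    have hp := hM.prime_apply_one hn0
    have hMp := hM.apply_eq_primeFlip hn0 hp rfl
    exact ⟨_, hp, (M _).2, odd_factorization_of_primeFlip hn0 hp hMp, hMp⟩
  · rintro ⟨p, hp, -, -, hMp⟩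
    exact isSpecialMatching_of_primeFlip hn0 hp hMp
end

section
/- Let K be a finite Eulerian poset with rank function ρ and P ∈ Or(K) a projection. Then im(P), as an induced subposet of K, is graded with rank function ρ (it has minimum, maximum, and any two elements x < y in im(P) with ρ(y) - ρ(x) > 1 admit z ∈ im(P) with x ≤ z ⋖ y). -/
open scoped Classical

/-!
On a nontrivial interval `[x, y]` of an Eulerian poset the weights `(-1) ^ ρ z` sum to zero.
Split `[x, y]` into the fibres of `P`: the fibre of `y` is `{y}`, and every other fibre is an
interval `[w, b]`, whose weight vanishes unless `b = w`. Hence some `w ∈ im P` with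
`x ≤ w < y` has trivial fibre in `[w, y]`, and then every `z` with `w ⋖ z ≤ y` is fixed by `P`.
Descending from `x` to such a `z` until `z = y` produces the required element covered by `y`.
-/

open Finset

section Projection

variable {K : Type*} [PartialOrder K] {P : K → K} {w x y : K}

theorem sum_Icc_neg_one_pow_eq_zero [LocallyFiniteOrder K] {ρ : K → ℕ} (hρ : StrictMono ρ)
    {μ : K → K → ℤ} (hμ : ∀ x y : K, x < y → μ x y = -∑ z ∈ Ico x y, μ x z)
    (hEuler : ∀ x y : K, x ≤ y → μ x y = (-1) ^ (ρ y - ρ x)) (hxy : x < y) :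
    ∑ z ∈ Icc x y, (-1 : ℤ) ^ ρ z = 0 := by
  calc ∑ z ∈ Icc x y, (-1 : ℤ) ^ ρ z = ∑ z ∈ Icc x y, (-1) ^ ρ x * μ x z := by
        refine sum_congr rfl fun z hz => ?_
        have hxz := (mem_Icc.1 hz).1
        rw [hEuler x z hxz, ← pow_add, Nat.add_sub_cancel' (hρ.monotone hxz)]
    _ = (-1) ^ ρ x * ∑ z ∈ Icc x y, μ x z := (mul_sum _ _ _).symm
    _ = 0 := by
        rw [← Ico_insert_right hxy.le, sum_insert right_notMem_Ico, hμ x y hxy]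
        ring

theorem exists_fiber_eq_Icc
    (hproj : ∀ x ∈ Set.range P, ∀ y ∈ Set.range P, x ≤ y →
      ∃ a b : K, {z : K | x ≤ z ∧ z ≤ y ∧ P z = x} = Set.Icc a b)
    (hw : P w = w) (hy : P y = y) (hwy : w ≤ y) :
    ∃ b, {z : K | w ≤ z ∧ z ≤ y ∧ P z = w} = Set.Icc w b := by
  obtain ⟨a, b, hab⟩ := hproj w ⟨w, hw⟩ y ⟨y, hy⟩ hwy
  have hw_mem : w ∈ Set.Icc a b := hab ▸ ⟨le_rfl, hwy, hw⟩
  have ha_mem : a ∈ {z : K | w ≤ z ∧ z ≤ y ∧ P z = w} :=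
    hab ▸ ⟨le_rfl, hw_mem.1.trans hw_mem.2⟩
  exact ⟨b, le_antisymm hw_mem.1 ha_mem.1 ▸ hab⟩

theorem filter_Icc_eq_filter_Icc_of_le [LocallyFiniteOrder K] (hreg : ∀ x, P x ≤ x)
    (hxw : x ≤ w) : {z ∈ Icc x y | P z = w} = {z ∈ Icc w y | P z = w} := by
  ext z
  simp only [mem_filter, mem_Icc]
  constructor
  · rintro ⟨⟨-, hzy⟩, rfl⟩
    exact ⟨⟨hreg z, hzy⟩, rfl⟩
  · rintro ⟨⟨hwz, hzy⟩, hz⟩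
    exact ⟨⟨hxw.trans hwz, hzy⟩, hz⟩

theorem sum_fiber_eq_zero [LocallyFiniteOrder K] {f : K → ℤ}
    (hf : ∀ a b : K, a < b → ∑ z ∈ Icc a b, f z = 0)
    (hproj : ∀ x ∈ Set.range P, ∀ y ∈ Set.range P, x ≤ y →
      ∃ a b : K, {z : K | x ≤ z ∧ z ≤ y ∧ P z = x} = Set.Icc a b)
    (hw : P w = w) (hy : P y = y) (hwy : w ≤ y)
    (hnontriv : ∃ z ∈ Icc w y, P z = w ∧ z ≠ w) :
    ∑ z ∈ Icc w y with P z = w, f z = 0 := by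
  obtain ⟨b, hb⟩ := exists_fiber_eq_Icc hproj hw hy hwy
  have hfiber : {z ∈ Icc w y | P z = w} = Icc w b := by
    ext z
    simpa [and_assoc] using Set.ext_iff.1 hb z
  obtain ⟨z, hz, hPz, hzw⟩ := hnontriv
  have hz' : z ∈ Icc w b := hfiber ▸ mem_filter.2 ⟨hz, hPz⟩
  rw [hfiber]
  exact hf w b ((mem_Icc.1 hz').1.lt_of_ne' hzw |>.trans_le (mem_Icc.1 hz').2)

theorem exists_fixed_fiber_eq_singleton [LocallyFiniteOrder K] {f : K → ℤ}
    (hf : ∀ a b : K, a < b → ∑ z ∈ Icc a b, f z = 0) (hf0 : ∀ z, f z ≠ 0)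
    (hreg : ∀ x, P x ≤ x) (hmono : Monotone P) (hidem : P ∘ P = P)
    (hproj : ∀ x ∈ Set.range P, ∀ y ∈ Set.range P, x ≤ y →
      ∃ a b : K, {z : K | x ≤ z ∧ z ≤ y ∧ P z = x} = Set.Icc a b)
    (hx : P x = x) (hy : P y = y) (hxy : x < y) :
    ∃ w, P w = w ∧ x ≤ w ∧ w < y ∧ ∀ z ∈ Icc w y, P z = w → z = w := by
  by_contra! h
  have hmaps : ∀ z ∈ Icc x y, P z ∈ Icc x y := fun z hz =>
    mem_Icc.2 ⟨hx ▸ hmono (mem_Icc.1 hz).1, (hreg z).trans (mem_Icc.1 hz).2⟩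
  have hfiber_zero : ∀ w ∈ Icc x y, w ≠ y → ∑ z ∈ Icc x y with P z = w, f z = 0 := by
    intro w hw hwy
    rw [filter_Icc_eq_filter_Icc_of_le hreg (mem_Icc.1 hw).1]
    by_cases hPw : P w = w
    · exact sum_fiber_eq_zero hf hproj hPw hy (mem_Icc.1 hw).2
        (h w hPw (mem_Icc.1 hw).1 ((mem_Icc.1 hw).2.lt_of_ne hwy))
    · refine sum_eq_zero fun z hz => absurd ?_ hPw
      rw [← (mem_filter.1 hz).2]
      exact congrFun hidem z
  have hfiber_top : {z ∈ Icc x y | P z = y} = {y} := by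
    rw [filter_Icc_eq_filter_Icc_of_le hreg hxy.le, Icc_self, filter_singleton, if_pos hy]
  refine hf0 y ?_
  calc f y = ∑ z ∈ Icc x y with P z = y, f z := by rw [hfiber_top, sum_singleton]
    _ = ∑ w ∈ Icc x y, ∑ z ∈ Icc x y with P z = w, f z :=
        (sum_eq_single_of_mem y (right_mem_Icc.2 hxy.le) hfiber_zero).symm
    _ = ∑ z ∈ Icc x y, f z := sum_fiberwise_of_maps_to hmaps f
    _ = 0 := hf x y hxy

theorem fixed_of_covBy_of_fiber_eq_singleton [LocallyFiniteOrder K] {z : K}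
    (hreg : ∀ x, P x ≤ x) (hmono : Monotone P) (hw : P w = w)
    (hsingle : ∀ z ∈ Icc w y, P z = w → z = w) (hwz : w ⋖ z) (hzy : z ≤ y) : P z = z := by
  rcases hwz.eq_or_eq (hw ▸ hmono hwz.le) (hreg z) with hPz | hPz
  · exact absurd (hsingle z (mem_Icc.2 ⟨hwz.le, hzy⟩) hPz) hwz.ne'
  · exact hPz

theorem exists_fixed_le_covBy [LocallyFiniteOrder K] [Finite K] {f : K → ℤ}
    (hf : ∀ a b : K, a < b → ∑ z ∈ Icc a b, f z = 0) (hf0 : ∀ z, f z ≠ 0)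
    (hreg : ∀ x, P x ≤ x) (hmono : Monotone P) (hidem : P ∘ P = P)
    (hproj : ∀ x ∈ Set.range P, ∀ y ∈ Set.range P, x ≤ y →
      ∃ a b : K, {z : K | x ≤ z ∧ z ≤ y ∧ P z = x} = Set.Icc a b)
    (hy : P y = y) : ∀ x, P x = x → x < y → ∃ z, P z = z ∧ x ≤ z ∧ z ⋖ y := by
  intro x
  induction x using WellFoundedGT.induction with
  | _ x ih =>
    intro hx hxy
    obtain ⟨w, hw, hxw, hwy, hsingle⟩ :=
      exists_fixed_fiber_eq_singleton hf hf0 hreg hmono hidem hproj hx hy hxy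
    obtain ⟨z, hwz, hzy⟩ := exists_covBy_le_of_lt hwy
    have hz := fixed_of_covBy_of_fiber_eq_singleton hreg hmono hw hsingle hwz hzy
    rcases hzy.eq_or_lt with rfl | hzy
    · exact ⟨w, hw, hxw, hwz⟩
    · obtain ⟨z', hz', hzz', hz'y⟩ := ih z (hxw.trans_lt hwz.lt) hz hzy
      exact ⟨z', hz', hxw.trans (hwz.le.trans hzz'), hz'y⟩

end Projection

theorem stmt_14_general {K : Type*} [PartialOrder K] [Fintype K] [OrderBot K] [OrderTop K]
    (ρ : K → ℕ) (hρ : ∀ x y : K, x ⋖ y → ρ y = ρ x + 1)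
    (μK : K → K → ℤ)
    (hμK2 : ∀ x y : K, x < y →
      μK x y = -∑ z ∈ Finset.univ.filter (fun z => x ≤ z ∧ z < y), μK x z)
    (hEuler : ∀ x y : K, x ≤ y → μK x y = (-1) ^ (ρ y - ρ x))
    (P : K → K) (hreg : ∀ x, P x ≤ x) (hmono : Monotone P) (hidem : P ∘ P = P)
    (hproj : ∀ x ∈ Set.range P, ∀ y ∈ Set.range P, x ≤ y →
      ∃ a b : K, {z : K | x ≤ z ∧ z ≤ y ∧ P z = x} = Set.Icc a b) :
    (⊥ ∈ Set.range P) ∧ (∀ x ∈ Set.range P, x ≤ P ⊤) ∧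
    (∀ x ∈ Set.range P, ∀ y ∈ Set.range P, x < y → 1 < ρ y - ρ x →
      ∃ z ∈ Set.range P, x ≤ z ∧ z ⋖ y) := by
  have : LocallyFiniteOrder K := Fintype.toLocallyFiniteOrder
  have hρ_strict : StrictMono ρ :=
    (strictMono_iff_forall_covBy ρ).2 fun a b hab => (hρ a b hab).symm ▸ Nat.lt_succ_self _
  have hμ : ∀ x y : K, x < y → μK x y = -∑ z ∈ Ico x y, μK x z := fun x y hxy => by
    rw [hμK2 x y hxy]
    congr 2
    ext z
    simp
  have hfix : ∀ x ∈ Set.range P, P x = x := by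
    rintro _ ⟨a, rfl⟩
    exact congrFun hidem a
  refine ⟨⟨⊥, le_bot_iff.1 (hreg ⊥)⟩, fun x ⟨a, hx⟩ => hx ▸ hmono le_top, ?_⟩
  rintro x hx y hy hxy -
  obtain ⟨z, hz, hxz, hzy⟩ :=
    exists_fixed_le_covBy (fun a b => sum_Icc_neg_one_pow_eq_zero hρ_strict hμ hEuler)
      (fun _ => pow_ne_zero _ (by norm_num)) hreg hmono hidem hproj (hfix y hy) x (hfix x hx) hxy
  exact ⟨z, ⟨z, hz⟩, hxz, hzy⟩

/-- Let `K` be a finite Eulerian poset with rank function `ρ` and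
`P ∈ Or(K)` a projection. Then `im(P)`, as induced subposet, is graded with rank
function `ρ`: it has minimum `⊥` and maximum `P ⊤`, and any `x < y` in `im(P)` with
`ρ y - ρ x > 1` admit `z ∈ im(P)` with `x ≤ z ⋖ y`. -/
theorem stmt_14 {K : Type*} [PartialOrder K] [Fintype K] [OrderBot K] [OrderTop K]
    (ρ : K → ℕ) (hρbot : ρ ⊥ = 0) (hρ : ∀ x y : K, x ⋖ y → ρ y = ρ x + 1)
    (μK : K → K → ℤ)
    (hμK1 : ∀ x : K, μK x x = 1)
    (hμK2 : ∀ x y : K, x < y →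
      μK x y = -∑ z ∈ Finset.univ.filter (fun z => x ≤ z ∧ z < y), μK x z)
    (hμK3 : ∀ x y : K, ¬ x ≤ y → μK x y = 0)
    (hEuler : ∀ x y : K, x ≤ y → μK x y = (-1) ^ (ρ y - ρ x))
    (P : K → K) (hreg : ∀ x, P x ≤ x) (hmono : Monotone P) (hidem : P ∘ P = P)
    (hproj : ∀ x ∈ Set.range P, ∀ y ∈ Set.range P, x ≤ y →
      ∃ a b : K, {z : K | x ≤ z ∧ z ≤ y ∧ P z = x} = Set.Icc a b) :
    (⊥ ∈ Set.range P) ∧ (∀ x ∈ Set.range P, x ≤ P ⊤) ∧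
    (∀ x ∈ Set.range P, ∀ y ∈ Set.range P, x < y → 1 < ρ y - ρ x →
      ∃ z ∈ Set.range P, x ≤ z ∧ z ⋖ y) :=
  stmt_14_general ρ hρ μK hμK2 hEuler P hreg hmono hidem hproj
end

section
/- Let n ≥ 2 and c_n the n-element chain. The number of special partial matchings of c_n equals the Fibonacci number F_{n-1}. -/
/-!
On a chain the speciality condition is automatic: if `x ⋖ y` are not matched to each other, then
`M x ≤ x` and `y ≤ M y`, since in a chain an element has at most one upper and one lower cover.
So special partial matchings of `c_{n+1}` are matchings of the Hasse diagram (a path) pairing `⊤`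
with its lower cover, i.e. Hasse matchings of `c_{n-1}`. A Hasse matching of `c_{k+2}` either
fixes `⊤` or pairs it with its lower cover, and in both cases it is the ordinal sum of a Hasse
matching of the initial segment below with a fixed matching of the top; this gives the Fibonacci
recursion.
-/

/-- A special partial matching of a finite graded poset with maximum `⊤`: an
involution `M` with `M ⊤ ⋖ ⊤`, such that each `x` satisfies `M x ⋖ x`, `x ⋖ M x` or
`M x = x`, and such that `x ⋖ y` with `x ≠ M y` implies `M x ≤ M y`. -/
def IsSpecialPartialMatching {K : Type*} [PartialOrder K] [OrderTop K]
    (M : K → K) : Prop :=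
  (∀ x, M (M x) = x) ∧ (M ⊤ ⋖ ⊤) ∧ (∀ x, M x ⋖ x ∨ x ⋖ M x ∨ M x = x) ∧
    (∀ x y : K, x ⋖ y → x ≠ M y → M x ≤ M y)

open Function Fin

/-- A partial matching in the sense of the paper, without the condition on `⊤`. -/
def IsHasseMatching {K : Type*} [Preorder K] (M : K → K) : Prop :=
  Involutive M ∧ ∀ x, M x ⋖ x ∨ x ⋖ M x ∨ M x = x

theorem isHasseMatching_id {K : Type*} [Preorder K] : IsHasseMatching (id : K → K) :=
  ⟨fun _ => rfl, fun _ => Or.inr (Or.inr rfl)⟩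

section LinearOrder

variable {K : Type*} [LinearOrder K] {M : K → K}

theorem IsHasseMatching.apply_le_apply_of_covBy (hM : IsHasseMatching M) {x y : K} (hxy : x ⋖ y)
    (hne : x ≠ M y) : M x ≤ M y := by
  have hx : M x ≤ x := by
    rcases hM.2 x with h | h | h
    · exact h.le
    · refine absurd ?_ hne
      rw [← h.unique_right hxy, hM.1]
    · exact h.le
  have hy : y ≤ M y := by
    rcases hM.2 y with h | h | h
    · exact absurd (h.unique_left hxy).symm hne
    · exact h.le
    · exact h.ge
  exact hx.trans (hxy.le.trans hy)

theorem isSpecialPartialMatching_iff [OrderTop K] :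
    IsSpecialPartialMatching M ↔ IsHasseMatching M ∧ M ⊤ ⋖ ⊤ :=
  ⟨fun ⟨hinv, htop, hcov, _⟩ => ⟨⟨hinv, hcov⟩, htop⟩,
    fun ⟨hM, htop⟩ => ⟨hM.1, htop, hM.2, fun _ _ => hM.apply_le_apply_of_covBy⟩⟩

end LinearOrder

namespace Fin

variable {k j : ℕ}

theorem castAdd_covBy_castAdd_iff {a b : Fin k} : castAdd j a ⋖ castAdd j b ↔ a ⋖ b := by
  simp only [Fin.covBy_iff, val_castAdd]

theorem natAdd_covBy_natAdd_iff {a b : Fin j} : natAdd k a ⋖ natAdd k b ↔ a ⋖ b := by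
  simp only [Fin.covBy_iff, val_natAdd, Nat.covBy_iff_add_one_eq]
  omega

def ordinalSum (N : Fin k → Fin k) (T : Fin j → Fin j) : Fin (k + j) → Fin (k + j) :=
  addCases (fun i => castAdd j (N i)) (fun i => natAdd k (T i))

@[simp] theorem ordinalSum_castAdd (N : Fin k → Fin k) (T : Fin j → Fin j) (i : Fin k) :
    ordinalSum N T (castAdd j i) = castAdd j (N i) :=
  addCases_left i

@[simp] theorem ordinalSum_natAdd (N : Fin k → Fin k) (T : Fin j → Fin j) (i : Fin j) :
    ordinalSum N T (natAdd k i) = natAdd k (T i) :=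
  addCases_right i

theorem isHasseMatching_ordinalSum {N : Fin k → Fin k} {T : Fin j → Fin j}
    (hN : IsHasseMatching N) (hT : IsHasseMatching T) : IsHasseMatching (ordinalSum N T) := by
  constructor
  · intro x
    induction x using addCases <;> simp [hN.1 _, hT.1 _]
  · intro x
    induction x using addCases with
    | left i =>
      simpa only [ordinalSum_castAdd, castAdd_covBy_castAdd_iff, castAdd_inj] using hN.2 i
    | right i =>
      simpa only [ordinalSum_natAdd, natAdd_covBy_natAdd_iff, natAdd_inj] using hT.2 i

theorem val_apply_castAdd_lt {M : Fin (k + j) → Fin (k + j)} {T : Fin j → Fin j}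
    (hM : Involutive M) (hT : ∀ i, M (natAdd k i) = natAdd k (T i)) (i : Fin k) :
    (M (castAdd j i) : ℕ) < k := by
  by_contra! h
  obtain ⟨l, hl⟩ : ∃ l : Fin j, M (castAdd j i) = natAdd k l :=
    ⟨⟨M (castAdd j i) - k, by omega⟩, Fin.ext (by simp only [natAdd_mk]; omega)⟩
  have := congrArg Fin.val (hM (castAdd j i))
  rw [hl, hT, val_natAdd, val_castAdd] at this
  omega

def restrictCastAdd (M : Fin (k + j) → Fin (k + j)) (h : ∀ i, (M (castAdd j i) : ℕ) < k) :
    Fin k → Fin k :=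
  fun i => (M (castAdd j i)).castLT (h i)

@[simp] theorem castAdd_restrictCastAdd (M : Fin (k + j) → Fin (k + j))
    (h : ∀ i, (M (castAdd j i) : ℕ) < k) (i : Fin k) :
    castAdd j (restrictCastAdd M h i) = M (castAdd j i) :=
  castAdd_castLT _ _ _

theorem IsHasseMatching.restrictCastAdd {M : Fin (k + j) → Fin (k + j)} (hM : IsHasseMatching M)
    (h : ∀ i, (M (castAdd j i) : ℕ) < k) : IsHasseMatching (restrictCastAdd M h) := by
  constructor
  · intro i
    rw [← castAdd_inj (n := j)]
    simp only [castAdd_restrictCastAdd, hM.1 _]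
  · intro i
    have := hM.2 (castAdd j i)
    rw [← castAdd_restrictCastAdd M h] at this
    simpa only [castAdd_covBy_castAdd_iff, castAdd_inj] using this

def hasseMatchingEquivOfTop {T : Fin j → Fin j} (hT : IsHasseMatching T) :
    {M : Fin (k + j) → Fin (k + j) //
        IsHasseMatching M ∧ ∀ i, M (natAdd k i) = natAdd k (T i)} ≃
      {N : Fin k → Fin k // IsHasseMatching N} where
  toFun M := ⟨restrictCastAdd M.1 (val_apply_castAdd_lt M.2.1.1 M.2.2),
    M.2.1.restrictCastAdd _⟩
  invFun N := ⟨ordinalSum N.1 T, isHasseMatching_ordinalSum N.2 hT, ordinalSum_natAdd N.1 T⟩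
  left_inv M := by
    ext x : 2
    induction x using addCases <;> simp [M.2.2]
  right_inv N := by
    ext i : 2
    rw [← castAdd_inj (n := j)]
    simp

theorem isHasseMatching_rev_two : IsHasseMatching (rev : Fin 2 → Fin 2) :=
  ⟨rev_involutive, fun x => by fin_cases x <;> simp [Fin.covBy_iff, Nat.covBy_iff_add_one_eq]⟩

theorem apply_natAdd_eq_natAdd_id_iff {M : Fin (k + 1) → Fin (k + 1)} :
    (∀ i, M (natAdd k i) = natAdd k (id i)) ↔ M ⊤ = ⊤ := by
  have h0 : natAdd k (0 : Fin 1) = ⊤ := rfl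
  simp only [forall_fin_one, id, h0]

theorem apply_natAdd_eq_natAdd_rev_iff {M : Fin (k + 2) → Fin (k + 2)}
    (hM : Involutive M) :
    (∀ i, M (natAdd k i) = natAdd k (rev i)) ↔ M ⊤ ⋖ ⊤ := by
  have h0 : natAdd k (0 : Fin 2) = (last k).castSucc := rfl
  have h1 : natAdd k (1 : Fin 2) = ⊤ := rfl
  have hcov : M ⊤ ⋖ ⊤ ↔ M ⊤ = (last k).castSucc := by
    simp [Fin.covBy_iff, Nat.covBy_iff_add_one_eq, Fin.ext_iff, top_eq_last]
  have hrev0 : rev (0 : Fin 2) = 1 := rfl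
  have hrev1 : rev (1 : Fin 2) = 0 := rfl
  simp only [forall_fin_two, hrev0, hrev1, h0, h1, hcov]
  exact ⟨And.right, fun h => ⟨by rw [← h, hM], h⟩⟩

end Fin

section OrderTop

variable {K : Type*} [Preorder K] [OrderTop K]

theorem IsHasseMatching.apply_top_eq_or_covBy {M : K → K} (hM : IsHasseMatching M) :
    M ⊤ = ⊤ ∨ M ⊤ ⋖ ⊤ := by
  rcases hM.2 ⊤ with h | h | h
  · exact Or.inr h
  · exact absurd h not_top_covBy
  · exact Or.inl h

theorem card_isHasseMatching_eq_add [Finite K] :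
    Nat.card {M : K → K // IsHasseMatching M} =
      Nat.card {M : K → K // IsHasseMatching M ∧ M ⊤ = ⊤} +
        Nat.card {M : K → K // IsHasseMatching M ∧ M ⊤ ⋖ ⊤} := by
  classical
  have hdisj : Disjoint (fun M : K → K => IsHasseMatching M ∧ M ⊤ = ⊤)
      (fun M => IsHasseMatching M ∧ M ⊤ ⋖ ⊤) :=
    Pi.disjoint_iff.mpr fun _ => Prop.disjoint_iff.mpr fun ⟨⟨_, h⟩, ⟨_, h'⟩⟩ => h'.ne h
  rw [← Nat.card_sum, ← Nat.card_congr (subtypeOrEquiv _ _ hdisj)]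
  exact Nat.card_congr <| Equiv.subtypeEquivRight fun M =>
    ⟨fun hM => hM.apply_top_eq_or_covBy.imp (⟨hM, ·⟩) (⟨hM, ·⟩),
      fun h => h.elim And.left And.left⟩

end OrderTop

theorem card_isHasseMatching_top_eq_top (k : ℕ) :
    Nat.card {M : Fin (k + 1) → Fin (k + 1) // IsHasseMatching M ∧ M ⊤ = ⊤} =
      Nat.card {N : Fin k → Fin k // IsHasseMatching N} :=
  Nat.card_congr <| (Equiv.subtypeEquivRight fun _ => and_congr_right fun _ =>
    apply_natAdd_eq_natAdd_id_iff.symm).trans (hasseMatchingEquivOfTop isHasseMatching_id)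

theorem card_isHasseMatching_top_covBy_top (k : ℕ) :
    Nat.card {M : Fin (k + 2) → Fin (k + 2) // IsHasseMatching M ∧ M ⊤ ⋖ ⊤} =
      Nat.card {N : Fin k → Fin k // IsHasseMatching N} :=
  Nat.card_congr <| (Equiv.subtypeEquivRight fun _ => and_congr_right fun hM =>
    (apply_natAdd_eq_natAdd_rev_iff hM.1).symm).trans
      (hasseMatchingEquivOfTop isHasseMatching_rev_two)

theorem card_isHasseMatching_fin :
    ∀ k, Nat.card {M : Fin k → Fin k // IsHasseMatching M} = Nat.fib (k + 1)
  | 0 | 1 => Nat.card_eq_one_iff_unique.mpr ⟨inferInstance, ⟨⟨id, isHasseMatching_id⟩⟩⟩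
  | k + 2 => by
    rw [card_isHasseMatching_eq_add, card_isHasseMatching_top_eq_top,
      card_isHasseMatching_top_covBy_top, card_isHasseMatching_fin (k + 1),
      card_isHasseMatching_fin k, Nat.fib_add_two (n := k + 1), add_comm]

/-- For `n ≥ 1`, the number of special partial matchings of the chain
with `n + 1` elements equals the Fibonacci number `F_n` (so the chain `c_m` with
`m = n + 1 ≥ 2` elements has `F_{m-1}` special partial matchings). -/
theorem stmt_18 (n : ℕ) (hn : 1 ≤ n) :
    Nat.card {M : Fin (n + 1) → Fin (n + 1) // IsSpecialPartialMatching M} =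
      Nat.fib n := by
  obtain ⟨m, rfl⟩ : ∃ m, n = m + 1 := ⟨n - 1, by omega⟩
  calc Nat.card {M : Fin (m + 2) → Fin (m + 2) // IsSpecialPartialMatching M}
      = Nat.card {M : Fin (m + 2) → Fin (m + 2) // IsHasseMatching M ∧ M ⊤ ⋖ ⊤} :=
        Nat.card_congr (Equiv.subtypeEquivRight fun _ => isSpecialPartialMatching_iff)
    _ = Nat.fib (m + 1) := by
      rw [card_isHasseMatching_top_covBy_top, card_isHasseMatching_fin]
end

section
/- Let K₁ and K₂ be finite graded posets. Then M is a special partial matching of K₁ × K₂ if and only if M = N × id_{K₂} for some special partial matching N of K₁, or M = id_{K₁} × N for some special partial matching N of K₂. -/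
section PartialMatching

variable {α : Type*} [PartialOrder α]

def IsPartialMatching (f : α → α) : Prop :=
  Function.Involutive f ∧ ∀ x, f x ⋖ x ∨ x ⋖ f x ∨ f x = x

namespace IsPartialMatching

variable {f g : α → α}

theorem apply_covBy_of_not_le (hf : IsPartialMatching f) {x : α} (h : ¬x ≤ f x) : f x ⋖ x := by
  rcases hf.2 x with h' | h' | h'
  · exact h'
  · exact absurd h'.le h
  · exact absurd h'.ge h

theorem covBy_apply_of_not_ge (hf : IsPartialMatching f) {x : α} (h : ¬f x ≤ x) : x ⋖ f x := by
  rcases hf.2 x with h' | h' | h'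
  · exact absurd h'.le h
  · exact h'
  · exact absurd h'.le h

theorem eq_of_le (hf : IsPartialMatching f) (hg : IsPartialMatching g) (hle : ∀ x, f x ≤ g x) :
    f = g := by
  have of_lt : ∀ x, x < g x → f x = g x := by
    intro x hx
    have hfg : f (g x) ≤ x := (hle (g x)).trans_eq (hg.1 x)
    have hcov : f (g x) ⋖ g x := hf.apply_covBy_of_not_le (hfg.trans_lt hx).not_ge
    have : f (g x) = x := ((hcov.eq_or_eq hfg hx.le).resolve_right hx.ne).symm
    simpa only [this] using hf.1 (g x)
  funext x
  rcases hg.2 x with hlt | hgt | heq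
  · have hcov := hf.apply_covBy_of_not_le ((hle x).trans_lt hlt.lt).not_ge
    exact ((hcov.eq_or_eq (hle x) hlt.le).resolve_right hlt.ne).symm
  · exact of_lt x hgt.lt
  · rcases ((hle x).trans_eq heq).eq_or_lt with h | h
    · exact h.trans heq.symm
    · have hx : x = g (f x) := by
        simpa only [hf.1 x] using of_lt (f x) (h.trans_le (by simpa only [hf.1 x] using hle (f x)))
      have : f x = x := by rw [← hg.1 (f x), ← hx, heq]
      exact absurd this h.ne

end IsPartialMatching

theorem IsSpecialPartialMatching.isPartialMatching [OrderTop α] {M : α → α}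
    (hM : IsSpecialPartialMatching M) : IsPartialMatching M :=
  ⟨hM.1, hM.2.2.1⟩

end PartialMatching

section Prod

variable {K₁ K₂ : Type*} [PartialOrder K₁] [PartialOrder K₂] {M : K₁ × K₂ → K₁ × K₂}

namespace IsPartialMatching

theorem apply_eq_mk_of_snd_ne (hM : IsPartialMatching M) {p : K₁ × K₂} (h : (M p).2 ≠ p.2) :
    M p = (p.1, (M p).2) ∧ ((M p).2 ⋖ p.2 ∨ p.2 ⋖ (M p).2) := by
  rcases hM.2 p with hc | hc | hc
  · rcases Prod.covBy_iff.1 hc with ⟨-, h2⟩ | ⟨h2, h1⟩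
    · exact absurd h2 h
    · exact ⟨Prod.ext h1 rfl, Or.inl h2⟩
  · rcases Prod.covBy_iff.1 hc with ⟨-, h2⟩ | ⟨h2, h1⟩
    · exact absurd h2.symm h
    · exact ⟨Prod.ext h1.symm rfl, Or.inr h2⟩
  · exact absurd (congrArg Prod.snd hc) h

theorem fst_of_snd_eq (hM : IsPartialMatching M) {y : K₂} (hy : ∀ x, (M (x, y)).2 = y) :
    IsPartialMatching fun x => (M (x, y)).1 := by
  have hMxy : ∀ x, M (x, y) = ((M (x, y)).1, y) := fun x => Prod.ext rfl (hy x)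
  refine ⟨fun x => ?_, fun x => ?_⟩
  · show (M ((M (x, y)).1, y)).1 = x
    rw [← hMxy, hM.1]
  · have := hM.2 (x, y)
    rw [hMxy x, Prod.mk_covBy_mk_iff_left, Prod.mk_covBy_mk_iff_left, Prod.mk.injEq] at this
    simpa only [and_true] using this

end IsPartialMatching

variable [OrderTop K₁] [OrderTop K₂]

theorem isSpecialPartialMatching_prodMap_id_iff {N : K₁ → K₁} :
    IsSpecialPartialMatching (Prod.map N id : K₁ × K₂ → K₁ × K₂) ↔
      IsSpecialPartialMatching N := by
  constructor
  · rintro ⟨hinv, htop, hadj, hlift⟩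
    refine ⟨fun x => congrArg Prod.fst (hinv (x, ⊤)), Prod.mk_covBy_mk_iff_left.1 htop,
      fun x => ?_, fun x y hxy hne => ?_⟩
    · simpa [Prod.mk_covBy_mk_iff_left] using hadj (x, ⊤)
    · exact (hlift (x, ⊤) (y, ⊤) (Prod.mk_covBy_mk_iff_left.2 hxy) (by simpa using hne)).1
  · rintro ⟨hinv, htop, hadj, hlift⟩
    refine ⟨fun ⟨_, _⟩ => by simp [hinv], Prod.mk_covBy_mk_iff_left.2 htop,
      fun ⟨a, _⟩ => by simpa [Prod.mk_covBy_mk_iff_left] using hadj a, ?_⟩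
    rintro ⟨a, b⟩ ⟨c, d⟩ hcov hne
    rcases Prod.mk_covBy_mk_iff.1 hcov with ⟨h, rfl⟩ | ⟨h, rfl⟩
    · exact Prod.mk_le_mk.2 ⟨hlift a c h fun he => hne (by simp [he]), le_rfl⟩
    · exact Prod.mk_le_mk.2 ⟨le_rfl, h.le⟩

theorem IsSpecialPartialMatching.conj_swap (hM : IsSpecialPartialMatching M) :
    IsSpecialPartialMatching (Prod.swap ∘ M ∘ Prod.swap) := by
  obtain ⟨hinv, htop, hadj, hlift⟩ := hM
  refine ⟨fun q => by simp [hinv], Prod.swap_covBy_swap.2 htop, fun q => ?_, fun p q hpq hne => ?_⟩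
  · simpa [← Prod.swap_covBy_swap (x := M q.swap), ← Prod.swap_covBy_swap (y := M q.swap),
      Prod.swap_eq_iff_eq_swap]
      using hadj q.swap
  · refine Prod.swap_le_swap.2 (hlift _ _ (Prod.swap_covBy_swap.2 hpq) fun h => hne ?_)
    simp [← h]

theorem isSpecialPartialMatching_id_prodMap_iff {N : K₂ → K₂} :
    IsSpecialPartialMatching (Prod.map id N : K₁ × K₂ → K₁ × K₂) ↔
      IsSpecialPartialMatching N :=
  ⟨fun h => isSpecialPartialMatching_prodMap_id_iff.1 h.conj_swap,
    fun h => (isSpecialPartialMatching_prodMap_id_iff (K₂ := K₁).2 h).conj_swap⟩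

namespace IsSpecialPartialMatching

theorem apply_mk_eq_of_covBy_fst (hM : IsSpecialPartialMatching M) {x x' : K₁} {v y : K₂}
    (hMxy : M (x, y) = (x, v)) (hvy : v ⋖ y) (hxx' : x ⋖ x') : M (x', y) = (x', v) := by
  have hMxv : M (x, v) = (x, y) := by rw [← hMxy, hM.1]
  have hne : (x, v) ≠ M (x', v) := fun h => by
    have : (x, y) = (x', v) := by rw [← hMxv, h, hM.1]
    exact hxx'.ne (congrArg Prod.fst this)
  have hle : (x, y) ≤ M (x', v) := hMxv ▸ hM.2.2.2 _ _ (Prod.mk_covBy_mk_iff_left.2 hxx') hne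
  have hvw : v < (M (x', v)).2 := hvy.lt.trans_le hle.2
  obtain ⟨hMx'v, hcov | hcov⟩ := hM.isPartialMatching.apply_eq_mk_of_snd_ne (p := (x', v)) hvw.ne'
  · exact absurd hcov.lt hvw.not_gt
  have hw : (M (x', v)).2 = y := ((hcov.eq_or_eq hvy.le hle.2).resolve_left hvy.ne').symm
  rw [← hM.1 (x', v), hMx'v, hw]

theorem apply_top_mk_eq [Finite K₁] (hM : IsSpecialPartialMatching M) {x : K₁} {v y : K₂}
    (hMxy : M (x, y) = (x, v)) (hvy : v ⋖ y) : M (⊤, y) = (⊤, v) := by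
  induction x using WellFoundedGT.induction with
  | _ x ih =>
    rcases eq_or_ne x ⊤ with rfl | hx
    · exact hMxy
    obtain ⟨x', hxx', -⟩ := exists_covBy_le_of_lt hx.lt_top
    exact ih x' hxx'.lt (hM.apply_mk_eq_of_covBy_fst hMxy hvy hxx')

theorem apply_mk_eq_of_forall_gt [Finite K₁] (hM : IsSpecialPartialMatching M)
    {N : K₁ → K₁} (hN : IsPartialMatching N) (hNtop : N ⊤ ⋖ ⊤) {y y' : K₂} (hyy' : y ⋖ y')
    (hgt : ∀ w, y < w → ∀ x, M (x, w) = (N x, w)) (x : K₁) : M (x, y) = (N x, y) := by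
  have hle : ∀ x, M (x, y) ≤ (N x, y') := fun x => by
    have hne : (x, y) ≠ M (x, y') := by
      rw [hgt y' hyy'.lt x]
      exact fun h => hyy'.ne (congrArg Prod.snd h)
    simpa only [hgt y' hyy'.lt x] using
      hM.2.2.2 (x, y) (x, y') (Prod.mk_covBy_mk_iff_right.2 hyy') hne
  have hsnd : ∀ x, (M (x, y)).2 = y := fun x => by
    by_contra hne
    obtain ⟨hMxy, hcov | hcov⟩ := hM.isPartialMatching.apply_eq_mk_of_snd_ne (p := (x, y)) hne
    · have := (hle ⊤).1
      rw [hM.apply_top_mk_eq hMxy hcov] at this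
      exact absurd this hNtop.lt.not_ge
    · have := hM.1 (x, y)
      rw [hMxy, hgt _ hcov.lt x] at this
      exact hne (congrArg Prod.snd this)
  have hrow : (fun x => (M (x, y)).1) = N :=
    (hM.isPartialMatching.fst_of_snd_eq hsnd).eq_of_le hN fun x => (hle x).1
  exact Prod.ext (congrFun hrow x) (hsnd x)

theorem eq_prodMap_id_of_snd_top [Finite K₁] [Finite K₂] (hM : IsSpecialPartialMatching M) (htop : (M ⊤).2 = ⊤) :
    M = Prod.map (fun x => (M (x, ⊤)).1) id := by
  set N := fun x => (M (x, ⊤)).1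
  have hsnd : ∀ x, (M (x, ⊤)).2 = ⊤ := fun x => by
    by_contra hne
    obtain ⟨hMx, hcov | hcov⟩ := hM.isPartialMatching.apply_eq_mk_of_snd_ne (p := (x, ⊤)) hne
    · exact hcov.ne (congrArg Prod.snd (hM.apply_top_mk_eq hMx hcov) ▸ htop)
    · exact hcov.lt.ne_top rfl
  have hNtop : N ⊤ ⋖ ⊤ :=
    ((Prod.covBy_iff.1 hM.2.1).resolve_right fun h => h.1.ne htop).1
  have hrows : ∀ y x, M (x, y) = (N x, y) := by
    intro y
    induction y using WellFoundedGT.induction with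
    | _ y ih =>
      rcases eq_or_ne y ⊤ with rfl | hy
      · exact fun x => Prod.ext rfl (hsnd x)
      obtain ⟨y', hyy', -⟩ := exists_covBy_le_of_lt hy.lt_top
      exact hM.apply_mk_eq_of_forall_gt (hM.isPartialMatching.fst_of_snd_eq hsnd) hNtop
        hyy' ih
  funext ⟨x, y⟩
  exact hrows y x

theorem eq_id_prodMap_of_fst_top [Finite K₁] [Finite K₂] (hM : IsSpecialPartialMatching M) (htop : (M ⊤).1 = ⊤) :
    M = Prod.map id (fun y => (M (⊤, y)).2) := by
  have h := hM.conj_swap.eq_prodMap_id_of_snd_top htop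
  funext ⟨x, y⟩
  simpa using congrArg Prod.swap (congrFun h (y, x))

end IsSpecialPartialMatching

end Prod

theorem stmt_19_general {K₁ K₂ : Type*} [PartialOrder K₁] [PartialOrder K₂]
    [Fintype K₁] [Fintype K₂] [OrderTop K₁] [OrderTop K₂]
    (M : K₁ × K₂ → K₁ × K₂) :
    IsSpecialPartialMatching M ↔
      ((∃ N : K₁ → K₁, IsSpecialPartialMatching N ∧ M = fun p => (N p.1, p.2)) ∨
       (∃ N : K₂ → K₂, IsSpecialPartialMatching N ∧ M = fun p => (p.1, N p.2))) := by
  refine ⟨fun hM => ?_, ?_⟩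
  · rcases Prod.covBy_iff.1 hM.2.1 with ⟨-, htop⟩ | ⟨-, htop⟩
    · obtain ⟨N, rfl⟩ : ∃ N, M = Prod.map N id := ⟨_, hM.eq_prodMap_id_of_snd_top htop⟩
      exact Or.inl ⟨N, isSpecialPartialMatching_prodMap_id_iff.1 hM, rfl⟩
    · obtain ⟨N, rfl⟩ : ∃ N, M = Prod.map id N := ⟨_, hM.eq_id_prodMap_of_fst_top htop⟩
      exact Or.inr ⟨N, isSpecialPartialMatching_id_prodMap_iff.1 hM, rfl⟩
  · rintro (⟨N, hN, rfl⟩ | ⟨N, hN, rfl⟩)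
    · exact isSpecialPartialMatching_prodMap_id_iff.2 hN
    · exact isSpecialPartialMatching_id_prodMap_iff.2 hN

/-- `M` is a special partial matching of the product `K₁ × K₂` of finite
graded posets iff `M = N × id` for a special partial matching `N` of `K₁`, or
`M = id × N` for a special partial matching `N` of `K₂`. -/
theorem stmt_19 {K₁ K₂ : Type*} [PartialOrder K₁] [PartialOrder K₂]
    [Fintype K₁] [Fintype K₂] [OrderBot K₁] [OrderTop K₁] [OrderBot K₂] [OrderTop K₂]
    (ρ₁ : K₁ → ℕ) (hρ₁bot : ρ₁ ⊥ = 0) (hρ₁ : ∀ x y : K₁, x ⋖ y → ρ₁ y = ρ₁ x + 1)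
    (ρ₂ : K₂ → ℕ) (hρ₂bot : ρ₂ ⊥ = 0) (hρ₂ : ∀ x y : K₂, x ⋖ y → ρ₂ y = ρ₂ x + 1)
    (M : K₁ × K₂ → K₁ × K₂) :
    IsSpecialPartialMatching M ↔
      ((∃ N : K₁ → K₁, IsSpecialPartialMatching N ∧ M = fun p => (N p.1, p.2)) ∨
       (∃ N : K₂ → K₂, IsSpecialPartialMatching N ∧ M = fun p => (p.1, N p.2))) :=
  stmt_19_general M
end
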